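/- arXiv:2509.17793 — 4 statements merged into one kernel-verified Lean document; each statement's English description precedes it below -/
import Mathlib

section
/- Let u : [a,b] × [0,T] → ℝ be continuous on the closed rectangle, with u(x,·) continuously differentiable on (0,T] with integrable time derivative, and u(·,t) twice continuously differentiable on (a,b). Suppose u satisfies the time-fractional diffusion equation ∂_t^α u = ∂_x² u − c(x)u + f(x,t) on (a,b)×(0,T] with Caputo derivative of order α ∈ (0,1), where c ≥ 0 and f ≤ 0 on the rectangle, and suppose the Robin boundary values satisfy σ₀u(a,t) + β₀u_x(a,t) ≤ 0 and σ₁u(b,t) + β₁u_x(b,t) ≤ 0 for all t ∈ (0,T], where σ₀, σ₁ > 0, β₀ ≤ 0, β₁ ≥ 0. Then u(x,t) ≤ max{max_{x∈[a,b]} u(x,0), 0} for all (x,t) in [a,b]×[0,T]. -/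
open Set MeasureTheory Filter Topology
open scoped Interval

/-- Caputo fractional derivative of order `α` of `y` at `t`. -/
noncomputable def caputo (α : ℝ) (y : ℝ → ℝ) (t : ℝ) : ℝ :=
  (1 / Real.Gamma (1 - α)) * ∫ s in (0:ℝ)..t, (t - s) ^ (-α) * deriv y s


lemma caputo_pos_of_max {α t0 : ℝ} (hα : α ∈ Ioo (0:ℝ) 1) (ht0 : 0 < t0) {y : ℝ → ℝ}
    (hy_cont : ContinuousOn y (Icc 0 t0))
    (hy_diff : ∀ t ∈ Ioc 0 t0, DifferentiableAt ℝ y t)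
    (hy_d_cont : ContinuousOn (deriv y) (Ioc 0 t0))
    (hy_int : IntervalIntegrable (deriv y) volume 0 t0)
    (hmax : ∀ s ∈ Icc 0 t0, y s ≤ y t0)
    (h0 : y 0 < y t0) :
    0 < caputo α y t0 := by
  obtain ⟨hα0, hα1⟩ := hα
  set w : ℝ → ℝ := fun s => (t0 - s) ^ (-α) with hw_def
  have hw_ca : ∀ s : ℝ, s < t0 → ContinuousAt w s := by
    intro s hs
    have h1 : ContinuousAt (fun s : ℝ => t0 - s) s := by fun_prop
    exact (Real.continuousAt_rpow_const (t0 - s) (-α)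
      (Or.inl (ne_of_gt (by linarith)))).comp h1
  have hhalf0 : (0:ℝ) < t0 / 2 := by linarith
  have hhalft0 : t0 / 2 < t0 := by linarith
  have J1 : IntervalIntegrable (fun s => w s * deriv y s) volume 0 (t0 / 2) := by
    have hss : [[0, t0/2]] ⊆ [[0, t0]] := by
      rw [uIcc_of_le hhalf0.le, uIcc_of_le ht0.le]
      exact Icc_subset_Icc le_rfl hhalft0.le
    have hint : IntervalIntegrable (deriv y) volume 0 (t0 / 2) := hy_int.mono_set hss
    refine hint.continuousOn_mul ?_
    intro s hs
    rw [uIcc_of_le hhalf0.le] at hs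
    exact (hw_ca s (lt_of_le_of_lt hs.2 hhalft0)).continuousWithinAt
  have J2 : IntervalIntegrable (fun s => w s * deriv y s) volume (t0 / 2) t0 := by
    have hw_int : IntervalIntegrable w volume (t0 / 2) t0 := by
      have h1 : IntervalIntegrable (fun x : ℝ => x ^ (-α)) volume 0 (t0 / 2) :=
        intervalIntegral.intervalIntegrable_rpow' (by linarith)
      have h2 := h1.comp_sub_left t0
      simpa [hw_def, sub_half] using h2.symm
    refine hw_int.mul_continuousOn ?_
    refine hy_d_cont.mono ?_
    rw [uIcc_of_le hhalft0.le]
    exact fun s hs => ⟨lt_of_lt_of_le hhalf0 hs.1, hs.2⟩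
  have J : IntervalIntegrable (fun s => w s * deriv y s) volume 0 t0 := J1.trans J2
  set F : ℝ → ℝ := fun r => ∫ s in (0:ℝ)..r, w s * deriv y s with hF_def
  have hF_cont : ContinuousOn F (Icc 0 t0) := by
    have := intervalIntegral.continuousOn_primitive_interval' J left_mem_uIcc
    rwa [uIcc_of_le ht0.le] at this
  have key : ∀ δ ρ : ℝ, 0 < δ → δ ≤ ρ → ρ < t0 →
      w ρ * (y ρ - y t0) - w δ * (y δ - y t0) ≤ F ρ - F δ := by
    intro δ ρ hδ hδρ hρ
    have hsub : Icc δ ρ ⊆ Ioo 0 t0 := fun s hs => ⟨lt_of_lt_of_le hδ hs.1,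
      lt_of_le_of_lt hs.2 hρ⟩
    have huIcc : [[δ, ρ]] = Icc δ ρ := uIcc_of_le hδρ
    have hw' : ∀ s ∈ [[δ, ρ]], HasDerivAt w (α * (t0 - s) ^ (-α - 1)) s := by
      intro s hs
      rw [huIcc] at hs
      have hpos : 0 < t0 - s := by have := (hsub hs).2; linarith
      have h1 : HasDerivAt (fun s : ℝ => t0 - s) (-1) s := (hasDerivAt_id s).const_sub t0
      have h2 := (Real.hasDerivAt_rpow_const (x := t0 - s) (p := -α)
        (Or.inl (ne_of_gt hpos))).comp s h1
      refine h2.congr_deriv ?_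
      ring
    have hg : ∀ s ∈ [[δ, ρ]], HasDerivAt (fun s => y s - y t0) (deriv y s) s := by
      intro s hs
      rw [huIcc] at hs
      exact ((hy_diff s ⟨(hsub hs).1, (hsub hs).2.le⟩).hasDerivAt).sub_const _
    have hw'_int : IntervalIntegrable (fun s => α * (t0 - s) ^ (-α - 1)) volume δ ρ := by
      apply ContinuousOn.intervalIntegrable
      intro s hs
      rw [huIcc] at hs
      have hpos : 0 < t0 - s := by have := (hsub hs).2; linarith
      have h1 : ContinuousAt (fun s : ℝ => t0 - s) s := by fun_prop
      exact (continuousAt_const.mul ((Real.continuousAt_rpow_const (t0 - s) (-α - 1)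
        (Or.inl (ne_of_gt hpos))).comp h1)).continuousWithinAt
    have hg_int : IntervalIntegrable (deriv y) volume δ ρ := by
      apply ContinuousOn.intervalIntegrable
      refine hy_d_cont.mono ?_
      rw [huIcc]
      exact fun s hs => ⟨(hsub hs).1, (hsub hs).2.le⟩
    have IBP := intervalIntegral.integral_mul_deriv_eq_deriv_mul hw' hg hw'_int hg_int
    have hIω : ∫ s in δ..ρ, α * (t0 - s) ^ (-α - 1) * (y s - y t0) ≤ 0 := by
      have h := intervalIntegral.integral_nonneg (f := fun s =>
          -(α * (t0 - s) ^ (-α - 1) * (y s - y t0))) (μ := volume) hδρ ?_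
      · rw [intervalIntegral.integral_neg] at h; linarith
      · intro s hs
        have hy_le : y s - y t0 ≤ 0 := by
          have := hmax s ⟨(hsub hs).1.le, (hsub hs).2.le⟩; linarith
        have hpos : 0 < t0 - s := by have := (hsub hs).2; linarith
        have hw_nn : 0 ≤ α * (t0 - s) ^ (-α - 1) := by positivity
        nlinarith [mul_nonneg hw_nn (neg_nonneg.2 hy_le)]
    have hF : F ρ - F δ = ∫ s in δ..ρ, w s * deriv y s := by
      have hss1 : [[0, δ]] ⊆ [[0, t0]] := by
        rw [uIcc_of_le hδ.le, uIcc_of_le ht0.le]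
        exact Icc_subset_Icc le_rfl (by linarith)
      have hss2 : [[δ, ρ]] ⊆ [[0, t0]] := by
        rw [huIcc, uIcc_of_le ht0.le]
        exact Icc_subset_Icc hδ.le hρ.le
      have h1 := J.mono_set hss1
      have h2 := J.mono_set hss2
      have := intervalIntegral.integral_add_adjacent_intervals h1 h2
      simp only [hF_def]
      linarith [this]
    rw [hF, IBP]
    simp only [hw_def]
    linarith [hIω]
  set e : ℕ → ℝ := fun n => t0 / (n + 2) with he_def
  have he_pos : ∀ n, 0 < e n := fun n => by positivity
  have he_le : ∀ n, e n ≤ t0 / 2 := by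
    intro n
    apply div_le_div_of_nonneg_left ht0.le (by norm_num)
    have : (0:ℝ) ≤ (n:ℝ) := Nat.cast_nonneg n
    linarith
  have he_lt : ∀ n, e n < t0 := fun n => lt_of_le_of_lt (he_le n) hhalft0
  have he_tendsto : Tendsto e atTop (𝓝 0) := by
    apply Filter.Tendsto.div_atTop (tendsto_const_nhds)
    exact tendsto_atTop_add_const_right _ 2 tendsto_natCast_atTop_atTop
  set ρ : ℕ → ℝ := fun n => t0 - e n with hρ_def
  have hρ_tendsto : Tendsto ρ atTop (𝓝 t0) := by
    have := he_tendsto.const_sub t0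
    simpa using this
  have hρ_mem : ∀ n, ρ n ∈ Icc 0 t0 := by
    intro n
    constructor
    · have := he_lt n; simp only [hρ_def]; linarith
    · have := he_pos n; simp only [hρ_def]; linarith
  have he_mem : ∀ n, e n ∈ Icc 0 t0 := fun n => ⟨(he_pos n).le, (he_lt n).le⟩
  have hA : Tendsto (fun n => F (ρ n) - F (e n)) atTop (𝓝 (F t0 - F 0)) := by
    have h1 : Tendsto (fun n => F (ρ n)) atTop (𝓝 (F t0)) := by
      refine ((hF_cont t0 (right_mem_Icc.2 ht0.le)).tendsto).comp ?_
      rw [tendsto_nhdsWithin_iff]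
      exact ⟨hρ_tendsto, Eventually.of_forall hρ_mem⟩
    have h2 : Tendsto (fun n => F (e n)) atTop (𝓝 (F 0)) := by
      refine ((hF_cont 0 (left_mem_Icc.2 ht0.le)).tendsto).comp ?_
      rw [tendsto_nhdsWithin_iff]
      exact ⟨he_tendsto, Eventually.of_forall he_mem⟩
    exact h1.sub h2
  have hB1 : Tendsto (fun n => w (e n) * (y (e n) - y t0)) atTop
      (𝓝 (t0 ^ (-α) * (y 0 - y t0))) := by
    have hy0 : Tendsto (fun n => y (e n)) atTop (𝓝 (y 0)) := by
      refine ((hy_cont 0 (left_mem_Icc.2 ht0.le)).tendsto).comp ?_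
      rw [tendsto_nhdsWithin_iff]
      exact ⟨he_tendsto, Eventually.of_forall he_mem⟩
    have hw0 : Tendsto (fun n => w (e n)) atTop (𝓝 (t0 ^ (-α))) := by
      have h := (hw_ca 0 ht0).tendsto.comp he_tendsto
      simpa [hw_def, Function.comp_def] using h
    exact hw0.mul (hy0.sub_const _)
  have hB2 : Tendsto (fun n => w (ρ n) * (y (ρ n) - y t0)) atTop (𝓝 0) := by
    have hder : HasDerivAt y (deriv y t0) t0 :=
      (hy_diff t0 ⟨ht0, le_refl _⟩).hasDerivAt
    have hslope := hasDerivAt_iff_tendsto_slope.1 hder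
    have hρ_punct : Tendsto ρ atTop (𝓝[≠] t0) := by
      rw [tendsto_nhdsWithin_iff]
      refine ⟨hρ_tendsto, Eventually.of_forall fun n => ?_⟩
      simp only [hρ_def, Set.mem_compl_iff, Set.mem_singleton_iff]
      intro h
      nlinarith [he_pos n]
    have hq : Tendsto (fun n => slope y t0 (ρ n)) atTop (𝓝 (deriv y t0)) :=
      hslope.comp hρ_punct
    have heq : ∀ n, w (ρ n) * (y (ρ n) - y t0)
        = -(slope y t0 (ρ n)) * (e n) ^ ((1:ℝ) - α) := by
      intro n
      have hepos := he_pos n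
      have hne : ρ n - t0 ≠ 0 := by
        simp only [hρ_def]; intro h; nlinarith
      have h1 : w (ρ n) = (e n) ^ (-α) := by
        simp only [hw_def, hρ_def]; ring_nf
      have h2 : y (ρ n) - y t0 = slope y t0 (ρ n) * (ρ n - t0) := by
        rw [slope_def_field]
        field_simp
      have h3 : ρ n - t0 = -(e n) := by simp [hρ_def]
      have h4 : (e n) ^ (-α) * e n = (e n) ^ ((1:ℝ) - α) := by
        rw [show (1:ℝ) - α = -α + 1 by ring, Real.rpow_add hepos, Real.rpow_one]
      rw [h1, h2, h3, ← h4]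
      ring
    rw [tendsto_congr heq]
    have hpow : Tendsto (fun n => (e n) ^ ((1:ℝ) - α)) atTop (𝓝 0) := by
      have hc := (Real.continuousAt_rpow_const 0 (1 - α) (Or.inr (by linarith))).tendsto
      have := hc.comp he_tendsto
      simpa [Real.zero_rpow (show (1:ℝ) - α ≠ 0 by linarith), Function.comp_def] using this
    have := (hq.neg).mul hpow
    simpa using this
  have hineq : ∀ n, w (ρ n) * (y (ρ n) - y t0) - w (e n) * (y (e n) - y t0)
      ≤ F (ρ n) - F (e n) := by
    intro n
    refine key (e n) (ρ n) (he_pos n) ?_ ?_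
    · have h1 := he_le n; simp only [hρ_def]; linarith
    · have := he_pos n; simp only [hρ_def]; linarith
  have hlim := le_of_tendsto_of_tendsto' (hB2.sub hB1) hA hineq
  have hF0 : F 0 = 0 := intervalIntegral.integral_same
  have hpos : 0 < t0 ^ (-α) * (y t0 - y 0) :=
    mul_pos (Real.rpow_pos_of_pos ht0 _) (by linarith)
  have hFt0 : 0 < F t0 := by nlinarith [hlim]
  have hΓ : 0 < Real.Gamma (1 - α) := Real.Gamma_pos_of_pos (by linarith)
  unfold caputo
  have : (∫ s in (0:ℝ)..t0, (t0 - s) ^ (-α) * deriv y s) = F t0 := rfl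
  rw [this]
  positivity


lemma deriv_nonpos_left_endpoint {f : ℝ → ℝ} {a b f' : ℝ} (hab : a < b)
    (hd : HasDerivWithinAt f f' (Icc a b) a) (hmax : ∀ z ∈ Icc a b, f z ≤ f a) :
    f' ≤ 0 := by
  rw [hasDerivWithinAt_iff_tendsto_slope] at hd
  have hsub : Ioc a b ⊆ Icc a b \ {a} := fun z hz =>
    ⟨⟨hz.1.le, hz.2⟩, by simp [ne_of_gt hz.1]⟩
  have hd' : Tendsto (slope f a) (𝓝[Ioc a b] a) (𝓝 f') :=
    hd.mono_left (nhdsWithin_mono _ hsub)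
  have hne : (𝓝[Ioc a b] a).NeBot := by
    rw [← mem_closure_iff_nhdsWithin_neBot, closure_Ioc hab.ne]
    exact left_mem_Icc.2 hab.le
  refine le_of_tendsto hd' ?_
  filter_upwards [self_mem_nhdsWithin] with z hz
  rw [slope_def_field]
  apply div_nonpos_of_nonpos_of_nonneg
  · have := hmax z ⟨hz.1.le, hz.2⟩; linarith
  · linarith [hz.1]

lemma deriv_nonneg_right_endpoint {f : ℝ → ℝ} {a b f' : ℝ} (hab : a < b)
    (hd : HasDerivWithinAt f f' (Icc a b) b) (hmax : ∀ z ∈ Icc a b, f z ≤ f b) :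
    0 ≤ f' := by
  rw [hasDerivWithinAt_iff_tendsto_slope] at hd
  have hsub : Ico a b ⊆ Icc a b \ {b} := fun z hz =>
    ⟨⟨hz.1, hz.2.le⟩, by simp [ne_of_lt hz.2]⟩
  have hd' : Tendsto (slope f b) (𝓝[Ico a b] b) (𝓝 f') :=
    hd.mono_left (nhdsWithin_mono _ hsub)
  have hne : (𝓝[Ico a b] b).NeBot := by
    rw [← mem_closure_iff_nhdsWithin_neBot, closure_Ico hab.ne]
    exact right_mem_Icc.2 hab.le
  refine ge_of_tendsto hd' ?_
  filter_upwards [self_mem_nhdsWithin] with z hz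
  rw [slope_def_field]
  apply div_nonneg_of_nonpos
  · have := hmax z ⟨hz.1, hz.2.le⟩; linarith
  · linarith [hz.2]

lemma second_deriv_nonpos_interior {g g' : ℝ → ℝ} {a b x0 g'' : ℝ}
    (hx0 : x0 ∈ Ioo a b)
    (hg : ∀ x ∈ Icc a b, HasDerivWithinAt g (g' x) (Icc a b) x)
    (hg'' : HasDerivAt g' g'' x0)
    (hmax : ∀ z ∈ Icc a b, g z ≤ g x0) : g'' ≤ 0 := by
  by_contra hpos
  push_neg at hpos
  have hIccnhds : Icc a b ∈ 𝓝 x0 := Icc_mem_nhds hx0.1 hx0.2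
  have hgat : ∀ x ∈ Ioo a b, HasDerivAt g (g' x) x := fun x hx =>
    (hg x ⟨hx.1.le, hx.2.le⟩).hasDerivAt (Icc_mem_nhds hx.1 hx.2)
  -- g' x0 = 0
  have hloc : IsLocalMax g x0 := by
    filter_upwards [hIccnhds] with z hz using hmax z hz
  have hg'0 : g' x0 = 0 := hloc.hasDerivAt_eq_zero (hgat x0 hx0)
  -- g' is positive just to the right of x0
  have hslope := hasDerivAt_iff_tendsto_slope.1 hg''
  have hev : ∀ᶠ z in 𝓝[>] x0, 0 < slope g' x0 z :=
    (hslope.mono_left (nhdsWithin_mono _ (fun z hz =>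
      (by simp [ne_of_gt (show x0 < z from hz)] : z ∈ ({x0}ᶜ : Set ℝ))))).eventually
      (eventually_gt_nhds hpos)
  have hev2 : ∀ᶠ z in 𝓝[>] x0, z < b :=
    eventually_nhdsWithin_of_eventually_nhds (eventually_lt_nhds hx0.2)
  obtain ⟨υ, hυ, hset⟩ := mem_nhdsGT_iff_exists_Ioo_subset.1 (hev.and hev2)
  have hυx0 : x0 < υ := hυ
  set z0 : ℝ := (x0 + min υ b) / 2 with hz0_def
  have hminx0 : x0 < min υ b := lt_min hυx0 hx0.2
  have hz0_gt : x0 < z0 := by simp only [hz0_def]; linarith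
  have hz0_ltυ : z0 < υ := by
    have := min_le_left υ b; simp only [hz0_def]; linarith
  have hz0_ltb : z0 < b := by
    have := min_le_right υ b; simp only [hz0_def]; linarith [hx0.2]
  have hz0_mem : z0 ∈ Icc a b := ⟨by linarith [hx0.1], hz0_ltb.le⟩
  -- MVT on [x0, z0]
  have hgc : ContinuousOn g (Icc x0 z0) := by
    refine ContinuousOn.mono (fun x hx => (hg x hx).continuousWithinAt) ?_
    exact Icc_subset_Icc hx0.1.le hz0_ltb.le
  have hgd : ∀ x ∈ Ioo x0 z0, HasDerivAt g (g' x) x := fun x hx =>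
    hgat x ⟨lt_trans hx0.1 hx.1, lt_trans hx.2 hz0_ltb⟩
  obtain ⟨ξ, hξ, hξeq⟩ := exists_hasDerivAt_eq_slope g g' hz0_gt hgc hgd
  have hξυ : ξ ∈ Ioo x0 υ := ⟨hξ.1, lt_trans hξ.2 hz0_ltυ⟩
  have hξpos : 0 < g' ξ := by
    have hs := (hset hξυ).1
    rw [slope_def_field, hg'0] at hs
    have hξx0 : 0 < ξ - x0 := by linarith [hξ.1]
    calc (0:ℝ) < (g' ξ - 0) / (ξ - x0) * (ξ - x0) := mul_pos hs hξx0
    _ = g' ξ := by field_simp; ring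
  have hcontra : g x0 < g z0 := by
    rw [hξeq] at hξpos
    have hz0x0 : 0 < z0 - x0 := by linarith
    have h2 : (g z0 - g x0) / (z0 - x0) * (z0 - x0) = g z0 - g x0 :=
      div_mul_cancel₀ _ (ne_of_gt hz0x0)
    linarith [mul_pos hξpos hz0x0, h2]
  exact absurd (hmax z0 hz0_mem) (not_le.2 hcontra)



/-- Maximum principle for the time-fractional diffusion equation with Robin
boundary data. -/
theorem caputo_robin_maximum_principle
    (a b T α σ0 σ1 β0 β1 : ℝ) (c : ℝ → ℝ) (f u ux uxx : ℝ → ℝ → ℝ)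
    (hab : a < b) (hT : 0 < T) (hα : α ∈ Ioo (0:ℝ) 1)
    (hσ0 : 0 < σ0) (hσ1 : 0 < σ1) (hβ0 : β0 ≤ 0) (hβ1 : 0 ≤ β1)
    (hc : ∀ x ∈ Icc a b, 0 ≤ c x)
    -- continuity of u on the closed rectangle
    (hu_cont : ContinuousOn (fun p : ℝ × ℝ => u p.1 p.2) (Icc a b ×ˢ Icc 0 T))
    -- C¹ in time on (0,T] with integrable time derivative
    (hu_t : ∀ x ∈ Icc a b, ∀ t ∈ Ioc 0 T, DifferentiableAt ℝ (u x) t)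
    (hu_t' : ∀ x ∈ Icc a b, ContinuousOn (deriv (u x)) (Ioc 0 T))
    (hu_int : ∀ x ∈ Icc a b, IntervalIntegrable (deriv (u x)) volume 0 T)
    -- spatial derivatives: first derivative up to the boundary, second in (a,b)
    (hux : ∀ t ∈ Ioc 0 T, ∀ x ∈ Icc a b,
      HasDerivWithinAt (fun z => u z t) (ux x t) (Icc a b) x)
    (huxx : ∀ t ∈ Ioc 0 T, ∀ x ∈ Ioo a b,
      HasDerivAt (fun z => ux z t) (uxx x t) x)
    (huxx_cont : ∀ t ∈ Ioc 0 T, ContinuousOn (fun z => uxx z t) (Ioo a b))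
    -- the time-fractional diffusion equation
    (hpde : ∀ x ∈ Ioo a b, ∀ t ∈ Ioc 0 T,
      caputo α (u x) t = uxx x t - c x * u x t + f x t)
    -- sign assumptions on the data
    (hf : ∀ x ∈ Icc a b, ∀ t ∈ Icc 0 T, f x t ≤ 0)
    (hbc_a : ∀ t ∈ Ioc 0 T, σ0 * u a t + β0 * ux a t ≤ 0)
    (hbc_b : ∀ t ∈ Ioc 0 T, σ1 * u b t + β1 * ux b t ≤ 0) :
    ∀ x ∈ Icc a b, ∀ t ∈ Icc 0 T,
      u x t ≤ max (sSup ((fun z => u z 0) '' Icc a b)) 0 := by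
  intro x hx t ht
  by_contra hlt
  push_neg at hlt
  have h0T : (0:ℝ) ∈ Icc 0 T := left_mem_Icc.2 hT.le
  have hc0 : ContinuousOn (fun z => u z 0) (Icc a b) := by
    have hmaps : MapsTo (fun z : ℝ => (z, (0:ℝ))) (Icc a b) (Icc a b ×ˢ Icc 0 T) :=
      fun z hz => ⟨hz, h0T⟩
    exact hu_cont.comp (Continuous.continuousOn (by fun_prop)) hmaps
  have hbdd : BddAbove ((fun z => u z 0) '' Icc a b) := isCompact_Icc.bddAbove_image hc0
  have hM0 : ∀ z ∈ Icc a b, u z 0 ≤ max (sSup ((fun z => u z 0) '' Icc a b)) 0 := fun z hz =>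
    le_trans (le_csSup hbdd (mem_image_of_mem _ hz)) (le_max_left _ _)
  have hK : IsCompact (Icc a b ×ˢ Icc 0 T) := isCompact_Icc.prod isCompact_Icc
  obtain ⟨p, hpK, hpmax⟩ := hK.exists_isMaxOn ⟨(a, 0), Set.mk_mem_prod (left_mem_Icc.2 hab.le) h0T⟩ hu_cont
  obtain ⟨x0, t0⟩ := p
  have hmaxpt : ∀ z ∈ Icc a b, ∀ s ∈ Icc 0 T, u z s ≤ u x0 t0 := fun z hz s hs =>
    hpmax (Set.mk_mem_prod hz hs)
  have hx0ab : x0 ∈ Icc a b := hpK.1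
  have ht0cc : t0 ∈ Icc 0 T := hpK.2
  have hM : max (sSup ((fun z => u z 0) '' Icc a b)) 0 < u x0 t0 :=
    lt_of_lt_of_le hlt (hmaxpt x hx t ht)
  have hMpos : 0 < u x0 t0 := lt_of_le_of_lt (le_max_right _ _) hM
  have ht0pos : 0 < t0 := by
    rcases eq_or_lt_of_le ht0cc.1 with h | h
    · exfalso
      rw [← h] at hM
      linarith [hM0 x0 hx0ab]
    · exact h
  have ht0T : t0 ∈ Ioc 0 T := ⟨ht0pos, ht0cc.2⟩
  have hsmax : ∀ z ∈ Icc a b, u z t0 ≤ u x0 t0 := fun z hz => hmaxpt z hz t0 ht0cc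
  rcases eq_or_lt_of_le hx0ab.1 with hxa | hxa
  · -- x0 = a
    rw [← hxa] at hsmax hMpos
    have hd : ux a t0 ≤ 0 :=
      deriv_nonpos_left_endpoint hab (hux t0 ht0T a (left_mem_Icc.2 hab.le)) hsmax
    have hbc := hbc_a t0 ht0T
    nlinarith [mul_pos hσ0 hMpos]
  rcases eq_or_lt_of_le hx0ab.2 with hxb | hxb
  · -- x0 = b
    rw [hxb] at hsmax hMpos
    have hd : 0 ≤ ux b t0 :=
      deriv_nonneg_right_endpoint hab (hux t0 ht0T b (right_mem_Icc.2 hab.le)) hsmax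
    have hbc := hbc_b t0 ht0T
    nlinarith [mul_pos hσ1 hMpos, mul_nonneg hβ1 hd]
  -- interior
  have hxx0 : x0 ∈ Ioo a b := ⟨hxa, hxb⟩
  have hLap : uxx x0 t0 ≤ 0 :=
    second_deriv_nonpos_interior hxx0 (hux t0 ht0T) (huxx t0 ht0T x0 hxx0) hsmax
  have hsub0 : ∀ s : ℝ, s ∈ Icc 0 t0 → s ∈ Icc 0 T :=
    fun s hs => ⟨hs.1, hs.2.trans ht0cc.2⟩
  have hcap : 0 < caputo α (u x0) t0 := by
    refine caputo_pos_of_max hα ht0pos ?_ ?_ ?_ ?_ ?_ ?_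
    · have hmaps : MapsTo (fun s : ℝ => (x0, s)) (Icc 0 t0) (Icc a b ×ˢ Icc 0 T) :=
        fun s hs => Set.mk_mem_prod hx0ab (hsub0 s hs)
      exact hu_cont.comp (Continuous.continuousOn (by fun_prop)) hmaps
    · exact fun s hs => hu_t x0 hx0ab s ⟨hs.1, hs.2.trans ht0cc.2⟩
    · exact (hu_t' x0 hx0ab).mono (fun s hs => ⟨hs.1, hs.2.trans ht0cc.2⟩)
    · refine (hu_int x0 hx0ab).mono_set ?_
      rw [uIcc_of_le ht0pos.le, uIcc_of_le hT.le]
      exact Icc_subset_Icc le_rfl ht0cc.2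
    · exact fun s hs => hmaxpt x0 hx0ab s (hsub0 s hs)
    · exact lt_of_le_of_lt (hM0 x0 hx0ab) hM
  have heq := hpde x0 hxx0 t0 ht0T
  have hcx : 0 ≤ c x0 * u x0 t0 := mul_nonneg (hc x0 hx0ab) hMpos.le
  have hfx : f x0 t0 ≤ 0 := hf x0 hx0ab t0 ht0cc
  linarith
end

section
/- Under the hypotheses of the maximum principle, if instead f ≥ 0 on [a,b]×[0,T] and the Robin boundary values satisfy σ₀u(a,t) + β₀u_x(a,t) ≥ 0 and σ₁u(b,t) + β₁u_x(b,t) ≥ 0 for all t ∈ (0,T], then u(x,t) ≥ min{min_{x∈[a,b]} u(x,0), 0} for all (x,t) in [a,b]×[0,T]. -/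
open Set MeasureTheory Filter Topology intervalIntegral

/-- At a minimum over `Icc a b` attained at the left endpoint, the one-sided
derivative is nonnegative. -/
lemma deriv_nonneg_at_left_min {f : ℝ → ℝ} {d a b : ℝ} (hab : a < b)
    (hd : HasDerivWithinAt f d (Icc a b) a) (hmin : ∀ z ∈ Icc a b, f a ≤ f z) : 0 ≤ d := by
  have h := hasDerivWithinAt_iff_tendsto_slope.mp hd
  have h' : Tendsto (slope f a) (𝓝[Ioc a b] a) (𝓝 d) :=
    h.mono_left (nhdsWithin_mono _ (fun z hz => ⟨⟨le_of_lt hz.1, hz.2⟩, ne_of_gt hz.1⟩))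
  haveI : (𝓝[Ioc a b] a).NeBot := by
    apply mem_closure_iff_nhdsWithin_neBot.mp
    rw [closure_Ioc (ne_of_lt hab)]
    exact left_mem_Icc.mpr hab.le
  refine ge_of_tendsto h' ?_
  filter_upwards [self_mem_nhdsWithin] with z hz
  rw [slope_def_field]
  exact div_nonneg (sub_nonneg.2 (hmin z (Ioc_subset_Icc_self hz))) (sub_nonneg.2 hz.1.le)

/-- At a minimum over `Icc a b` attained at the right endpoint, the one-sided
derivative is nonpositive. -/
lemma deriv_nonpos_at_right_min {f : ℝ → ℝ} {d a b : ℝ} (hab : a < b)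
    (hd : HasDerivWithinAt f d (Icc a b) b) (hmin : ∀ z ∈ Icc a b, f b ≤ f z) : d ≤ 0 := by
  have h := hasDerivWithinAt_iff_tendsto_slope.mp hd
  have h' : Tendsto (slope f b) (𝓝[Ico a b] b) (𝓝 d) :=
    h.mono_left (nhdsWithin_mono _ (fun z hz => ⟨⟨hz.1, le_of_lt hz.2⟩, ne_of_lt hz.2⟩))
  haveI : (𝓝[Ico a b] b).NeBot := by
    apply mem_closure_iff_nhdsWithin_neBot.mp
    rw [closure_Ico (ne_of_lt hab)]
    exact right_mem_Icc.mpr hab.le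
  refine le_of_tendsto h' ?_
  filter_upwards [self_mem_nhdsWithin] with z hz
  rw [slope_def_field]
  exact div_nonpos_iff.mpr (Or.inl ⟨sub_nonneg.2 (hmin z (Ico_subset_Icc_self hz)),
    sub_nonpos.2 hz.2.le⟩)

/-- Second derivative test at an interior minimum. -/
lemma second_deriv_nonneg_at_interior_min {a b x : ℝ} {f fx : ℝ → ℝ} {d : ℝ}
    (hx : x ∈ Ioo a b)
    (hf : ∀ z ∈ Icc a b, HasDerivWithinAt f (fx z) (Icc a b) z)
    (hfx : HasDerivAt fx d x)
    (hmin : ∀ z ∈ Icc a b, f x ≤ f z) : 0 ≤ d := by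
  by_contra hd
  push_neg at hd
  have hfd : ∀ z ∈ Ioo a b, HasDerivAt f (fx z) z := fun z hz =>
    (hf z (Ioo_subset_Icc_self hz)).hasDerivAt (Icc_mem_nhds hz.1 hz.2)
  have hfx0 : fx x = 0 := by
    have hloc : IsLocalMin f x :=
      Filter.eventually_of_mem (Icc_mem_nhds hx.1 hx.2) hmin
    exact hloc.hasDerivAt_eq_zero (hfd x hx)
  have hslope : Tendsto (slope fx x) (𝓝[>] x) (𝓝 d) :=
    (hasDerivAt_iff_tendsto_slope.mp hfx).mono_left
      (nhdsWithin_mono _ (fun z hz => ne_of_gt hz))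
  have h2 : ∀ᶠ z in 𝓝[>] x, slope fx x z < 0 := hslope.eventually_lt_const hd
  obtain ⟨δ, hδ, hδsub⟩ := (nhdsGT_basis_of_exists_gt ⟨b, hx.2⟩).eventually_iff.mp h2
  set z := min δ b with hz_def
  have hxz : x < z := lt_min hδ hx.2
  have hzb : z ≤ b := min_le_right δ b
  have haz : a ≤ z := le_of_lt (lt_trans hx.1 hxz)
  have hcont : ContinuousOn f (Icc x z) := by
    apply ContinuousOn.mono (s := Icc a b) (fun w hw => (hf w hw).continuousWithinAt)
    exact Icc_subset_Icc hx.1.le hzb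
  have hderiv : ∀ w ∈ Ioo x z, HasDerivAt f (fx w) w := fun w hw =>
    hfd w ⟨lt_trans hx.1 hw.1, lt_of_lt_of_le hw.2 hzb⟩
  obtain ⟨c, hc, hceq⟩ := exists_hasDerivAt_eq_slope f fx hxz hcont hderiv
  have h3 : slope fx x c < 0 := hδsub ⟨hc.1, lt_of_lt_of_le hc.2 (min_le_left δ b)⟩
  rw [slope_def_field, hfx0, sub_zero] at h3
  have hcx : 0 < c - x := sub_pos.2 hc.1
  have hfxc : fx c < 0 := by
    rcases div_neg_iff.mp h3 with h | h
    · linarith [h.2]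
    · exact h.1
  have h4 : (f z - f x) / (z - x) < 0 := by rw [← hceq]; exact hfxc
  have hzx : 0 < z - x := sub_pos.2 hxz
  have h5 : f z < f x := by
    rcases div_neg_iff.mp h4 with h | h
    · linarith [h.2]
    · linarith [h.1]
  exact absurd (hmin z ⟨haz, hzb⟩) (not_le.mpr h5)

/-- Luchko-type estimate: at a point `t0 > 0` where `y` attains its minimum over
`[0, t0]`, the Caputo derivative is bounded above by
`t0^(-α) (y t0 - y 0) / Γ(1-α)`. -/
lemma caputo_le_at_min {α t0 : ℝ} {y : ℝ → ℝ} (hα : α ∈ Ioo (0:ℝ) 1) (ht0 : 0 < t0)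
    (hy_cont : ContinuousOn y (Icc 0 t0))
    (hy_diff : ∀ t ∈ Ioc 0 t0, DifferentiableAt ℝ y t)
    (hy'_cont : ContinuousOn (deriv y) (Ioc 0 t0))
    (hy'_int : IntervalIntegrable (deriv y) volume 0 t0)
    (hmin : ∀ s ∈ Icc 0 t0, y t0 ≤ y s) :
    caputo α y t0 ≤ (1 / Real.Gamma (1 - α)) * (t0 ^ (-α) * (y t0 - y 0)) := by
  obtain ⟨hα0, hα1⟩ := hα
  set K : ℝ → ℝ := fun s => (t0 - s) ^ (-α) with hK_def
  set K' : ℝ → ℝ := fun s => α * (t0 - s) ^ (-α - 1) with hK'_def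
  set F : ℝ → ℝ := fun s => K s * deriv y s with hF_def
  -- Integrability of F on [0, t0]
  have hKcont : ∀ {p q : ℝ}, q < t0 → ContinuousOn K (Icc p q) := by
    intro p q hq
    apply ContinuousOn.rpow_const (continuousOn_const.sub continuousOn_id)
    intro x hx
    left
    simp only [Pi.sub_apply, id_eq]
    exact ne_of_gt (by linarith [hx.2])
  have hK'cont : ∀ {p q : ℝ}, q < t0 → ContinuousOn K' (Icc p q) := by
    intro p q hq
    apply ContinuousOn.mul continuousOn_const
    apply ContinuousOn.rpow_const (continuousOn_const.sub continuousOn_id)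
    intro x hx
    left
    simp only [Pi.sub_apply, id_eq]
    exact ne_of_gt (by linarith [hx.2])
  have hF_int : IntervalIntegrable F volume 0 t0 := by
    have A1 : IntervalIntegrable F volume 0 (t0/2) := by
      have hsub : uIcc 0 (t0/2) ⊆ uIcc 0 t0 := by
        rw [uIcc_of_le (by linarith), uIcc_of_le ht0.le]
        exact Icc_subset_Icc le_rfl (by linarith)
      have := (hy'_int.mono_set hsub).continuousOn_mul (g := K)
        (by rw [uIcc_of_le (by linarith)]; exact hKcont (by linarith))
      exact this
    have A2 : IntervalIntegrable F volume (t0/2) t0 := by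
      have hKint : IntervalIntegrable K volume (t0/2) t0 := by
        have h1 : IntervalIntegrable (fun x : ℝ => x ^ (-α)) volume 0 (t0/2) :=
          intervalIntegral.intervalIntegrable_rpow' (by linarith)
        have h2 := (h1.comp_sub_left t0).symm
        have he1 : t0 - t0 / 2 = t0 / 2 := by ring
        have he2 : t0 - 0 = t0 := by ring
        rw [he1, he2] at h2
        exact h2
      apply hKint.mul_continuousOn
      rw [uIcc_of_le (by linarith)]
      apply hy'_cont.mono
      intro x hx
      exact ⟨by linarith [hx.1], hx.2⟩
    exact A1.trans A2
  -- Step B: integration by parts inequality on [δ, t0 - ε]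
  have stepB : ∀ ε ∈ Ioo (0:ℝ) (t0/2), ∀ δ ∈ Ioo (0:ℝ) (t0 - ε),
      (∫ s in δ..(t0 - ε), F s) ≤
        K (t0 - ε) * (y (t0 - ε) - y t0) - K δ * (y δ - y t0) := by
    rintro ε ⟨hε0, hε2⟩ δ ⟨hδ0, hδb⟩
    set b' : ℝ := t0 - ε with hb'_def
    have hb't0 : b' < t0 := by rw [hb'_def]; linarith
    have hδb' : δ ≤ b' := hδb.le
    have huIcc : uIcc δ b' = Icc δ b' := uIcc_of_le hδb'
    have hmemIoc : ∀ x ∈ Icc δ b', x ∈ Ioc 0 t0 := fun x hx =>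
      ⟨lt_of_lt_of_le hδ0 hx.1, le_of_lt (lt_of_le_of_lt hx.2 hb't0)⟩
    have hKd : ∀ x ∈ uIcc δ b', HasDerivAt K (K' x) x := by
      intro x hx
      rw [huIcc] at hx
      have hpos : (0:ℝ) < t0 - x := by
        have := hx.2; simp only [hb'_def] at this; linarith
      have h1 : HasDerivAt (fun s : ℝ => t0 - s) (-1) x :=
        (hasDerivAt_id x).const_sub t0
      have h2 := h1.rpow_const (p := -α) (Or.inl (ne_of_gt hpos))
      convert h2 using 1
      show α * (t0 - x) ^ (-α - 1) = -1 * (-α) * (t0 - x) ^ (-α - 1)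
      ring
    have hyd : ∀ x ∈ uIcc δ b', HasDerivAt y (deriv y x) x := by
      intro x hx
      rw [huIcc] at hx
      exact (hy_diff x (hmemIoc x hx)).hasDerivAt
    have hK'int : IntervalIntegrable K' volume δ b' := by
      apply ContinuousOn.intervalIntegrable
      rw [huIcc]; exact hK'cont hb't0
    have hy'int2 : IntervalIntegrable (deriv y) volume δ b' := by
      apply ContinuousOn.intervalIntegrable
      rw [huIcc]; exact hy'_cont.mono hmemIoc
    have hibp := intervalIntegral.integral_mul_deriv_eq_deriv_mul hKd hyd hK'int hy'int2
    have hftc : (∫ s in δ..b', K' s) = K b' - K δ :=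
      intervalIntegral.integral_eq_sub_of_hasDerivAt hKd hK'int
    have hycont2 : ContinuousOn y (Icc δ b') :=
      hy_cont.mono (fun x hx => ⟨le_of_lt (lt_of_lt_of_le hδ0 hx.1), (hmemIoc x hx).2⟩)
    have hK'y_int : IntervalIntegrable (fun s => K' s * y s) volume δ b' := by
      apply ContinuousOn.intervalIntegrable
      rw [huIcc]; exact (hK'cont hb't0).mul hycont2
    have hK'c_int : IntervalIntegrable (fun s => K' s * y t0) volume δ b' := by
      apply ContinuousOn.intervalIntegrable
      rw [huIcc]; exact (hK'cont hb't0).mul continuousOn_const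
    have hmono : (∫ s in δ..b', K' s * y t0) ≤ ∫ s in δ..b', K' s * y s := by
      apply intervalIntegral.integral_mono_on hδb' hK'c_int hK'y_int
      intro x hx
      have hK'nn : 0 ≤ K' x := by
        apply mul_nonneg hα0.le
        apply Real.rpow_nonneg
        have := (hmemIoc x hx).2
        nlinarith [hb't0, hx.2]
      exact mul_le_mul_of_nonneg_left
        (hmin x ⟨(hmemIoc x hx).1.le, (hmemIoc x hx).2⟩) hK'nn
    have hconst : (∫ s in δ..b', K' s * y t0) = (K b' - K δ) * y t0 := by
      rw [intervalIntegral.integral_mul_const, hftc]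
    rw [hibp]
    have : (K b' - K δ) * y t0 ≤ ∫ s in δ..b', K' s * y s := by
      rw [← hconst]; exact hmono
    nlinarith [this]
  -- Step C: let δ → 0
  have stepC : ∀ ε ∈ Ioo (0:ℝ) (t0/2),
      (∫ s in (0:ℝ)..(t0 - ε), F s) ≤
        K (t0 - ε) * (y (t0 - ε) - y t0) - t0 ^ (-α) * (y 0 - y t0) := by
    rintro ε ⟨hε0, hε2⟩
    set b' : ℝ := t0 - ε with hb'_def
    have hb'0 : (0:ℝ) < b' := by rw [hb'_def]; linarith
    have hb't0 : b' < t0 := by rw [hb'_def]; linarith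
    have hF0b' : IntervalIntegrable F volume 0 b' := by
      apply hF_int.mono_set
      rw [uIcc_of_le hb'0.le, uIcc_of_le ht0.le]
      exact Icc_subset_Icc le_rfl hb't0.le
    set l : Filter ℝ := 𝓝[Ioo (0:ℝ) b'] 0 with hl_def
    haveI : l.NeBot := by
      apply mem_closure_iff_nhdsWithin_neBot.mp
      rw [closure_Ioo (ne_of_lt hb'0)]
      exact left_mem_Icc.mpr hb'0.le
    -- tendsto of the truncated integrals
    have hP : Tendsto (fun δ => ∫ s in (0:ℝ)..δ, F s) l (𝓝 0) := by
      have hcont := intervalIntegral.continuousOn_primitive_interval' hF0b'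
        (left_mem_uIcc (a := (0:ℝ)) (b := b'))
      have hcw := hcont 0 left_mem_uIcc
      have hsub2 : Ioo (0:ℝ) b' ⊆ uIcc 0 b' := by
        rw [uIcc_of_le hb'0.le]; exact Ioo_subset_Icc_self
      have h := hcw.mono_left (nhdsWithin_mono _ hsub2)
      simpa using h
    have hf1 : Tendsto (fun δ => ∫ s in δ..b', F s) l (𝓝 (∫ s in (0:ℝ)..b', F s)) := by
      have heq : ∀ δ ∈ Ioo (0:ℝ) b',
          (∫ s in δ..b', F s) = (∫ s in (0:ℝ)..b', F s) - ∫ s in (0:ℝ)..δ, F s := by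
        intro δ hδ
        have h1 : IntervalIntegrable F volume 0 δ := by
          apply hF0b'.mono_set
          rw [uIcc_of_le hδ.1.le, uIcc_of_le hb'0.le]
          exact Icc_subset_Icc le_rfl hδ.2.le
        have h2 : IntervalIntegrable F volume δ b' := by
          apply hF0b'.mono_set
          rw [uIcc_of_le hδ.2.le, uIcc_of_le hb'0.le]
          exact Icc_subset_Icc hδ.1.le le_rfl
        have := intervalIntegral.integral_add_adjacent_intervals h1 h2
        linarith
      have := (tendsto_const_nhds (x := ∫ s in (0:ℝ)..b', F s) (f := l)).sub hP
      rw [sub_zero] at this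
      apply this.congr'
      filter_upwards [self_mem_nhdsWithin] with δ hδ
      exact (heq δ hδ).symm
    have hf2 : Tendsto (fun δ => K b' * (y b' - y t0) - K δ * (y δ - y t0)) l
        (𝓝 (K b' * (y b' - y t0) - t0 ^ (-α) * (y 0 - y t0))) := by
      have hKt : Tendsto K l (𝓝 (t0 ^ (-α))) := by
        have hca : ContinuousAt (fun δ : ℝ => (t0 - δ) ^ (-α)) 0 := by
          apply ContinuousAt.rpow_const
          · exact (continuous_const.sub continuous_id).continuousAt
          · left; simp only [sub_zero]; exact ne_of_gt ht0
        have h := hca.tendsto.mono_left (nhdsWithin_le_nhds : l ≤ 𝓝 0)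
        simp only [sub_zero] at h
        exact h
      have hyt : Tendsto y l (𝓝 (y 0)) := by
        have := hy_cont 0 (left_mem_Icc.mpr ht0.le)
        apply this.mono_left
        apply nhdsWithin_mono
        intro x hx
        exact ⟨hx.1.le, le_trans hx.2.le hb't0.le⟩
      exact tendsto_const_nhds.sub (hKt.mul (hyt.sub tendsto_const_nhds))
    apply le_of_tendsto_of_tendsto hf1 hf2
    filter_upwards [self_mem_nhdsWithin] with δ hδ
    have h := stepB ε ⟨hε0, hε2⟩ δ (by rw [hb'_def] at hδ; exact hδ)
    rw [← hb'_def] at h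
    exact h
  -- bound on deriv y near t0
  obtain ⟨L, hL⟩ := (isCompact_Icc (a := t0/2) (b := t0)).exists_bound_of_continuousOn
    (hy'_cont.mono (fun x hx => ⟨lt_of_lt_of_le (by linarith) hx.1, hx.2⟩))
  have hL0 : 0 ≤ L := le_trans (norm_nonneg _) (hL t0 ⟨by linarith, le_rfl⟩)
  -- Step D: let ε → 0
  have stepD : ∀ ε ∈ Ioo (0:ℝ) (t0/2),
      (∫ s in (0:ℝ)..(t0 - ε), F s) ≤ L * ε ^ (1 - α) - t0 ^ (-α) * (y 0 - y t0) := by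
    rintro ε ⟨hε0, hε2⟩
    have hC := stepC ε ⟨hε0, hε2⟩
    have hGbound : y (t0 - ε) - y t0 ≤ L * ε := by
      have hlt : t0 - ε < t0 := by linarith
      have hcont2 : ContinuousOn y (Icc (t0 - ε) t0) :=
        hy_cont.mono (Icc_subset_Icc (by linarith) le_rfl)
      have hder2 : ∀ x ∈ Ioo (t0 - ε) t0, HasDerivAt y (deriv y x) x := fun x hx =>
        (hy_diff x ⟨by linarith [hx.1], hx.2.le⟩).hasDerivAt
      obtain ⟨cc, hcc, hcceq⟩ := exists_hasDerivAt_eq_slope y (deriv y) hlt hcont2 hder2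
      have hccmem : cc ∈ Icc (t0/2) t0 := ⟨by linarith [hcc.1], hcc.2.le⟩
      have hbnd := hL cc hccmem
      rw [Real.norm_eq_abs] at hbnd
      have heq2 : deriv y cc = (y t0 - y (t0 - ε)) / (t0 - (t0 - ε)) := hcceq
      have hden : t0 - (t0 - ε) = ε := by ring
      rw [hden] at heq2
      have h6 : deriv y cc * ε = y t0 - y (t0 - ε) :=
        (eq_div_iff (ne_of_gt hε0)).mp heq2
      have habs := abs_le.mp hbnd
      nlinarith [habs.1, habs.2]
    have hKval : K (t0 - ε) = ε ^ (-α) := by simp [hK_def]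
    have hεnn : (0:ℝ) ≤ ε ^ (-α) := Real.rpow_nonneg hε0.le _
    have h7 : K (t0 - ε) * (y (t0 - ε) - y t0) ≤ ε ^ (-α) * (L * ε) := by
      rw [hKval]
      exact mul_le_mul_of_nonneg_left hGbound hεnn
    have h8 : ε ^ (-α) * (L * ε) = L * ε ^ (1 - α) := by
      rw [show (1:ℝ) - α = -α + 1 by ring, Real.rpow_add hε0, Real.rpow_one]
      ring
    linarith [hC, h7, h8.le, h8.ge]
  -- take the limit ε → 0
  have hfinal : (∫ s in (0:ℝ)..t0, F s) ≤ t0 ^ (-α) * (y t0 - y 0) := by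
    set l2 : Filter ℝ := 𝓝[Ioo (0:ℝ) (t0/2)] 0 with hl2_def
    haveI : l2.NeBot := by
      apply mem_closure_iff_nhdsWithin_neBot.mp
      rw [closure_Ioo (ne_of_lt (by linarith : (0:ℝ) < t0/2))]
      exact left_mem_Icc.mpr (by linarith)
    have hLHS : Tendsto (fun ε => ∫ s in (0:ℝ)..(t0 - ε), F s) l2
        (𝓝 (∫ s in (0:ℝ)..t0, F s)) := by
      have hcont := intervalIntegral.continuousOn_primitive_interval' hF_int
        (left_mem_uIcc (a := (0:ℝ)) (b := t0))
      have hcw : ContinuousWithinAt (fun x => ∫ s in (0:ℝ)..x, F s) (uIcc 0 t0) t0 :=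
        hcont t0 (right_mem_uIcc)
      have hg : Tendsto (fun ε : ℝ => t0 - ε) l2 (𝓝[uIcc 0 t0] t0) := by
        rw [tendsto_nhdsWithin_iff]
        constructor
        · have : Tendsto (fun ε : ℝ => t0 - ε) (𝓝 0) (𝓝 (t0 - 0)) :=
            (continuous_const.sub continuous_id).tendsto 0
          rw [sub_zero] at this
          exact this.mono_left nhdsWithin_le_nhds
        · filter_upwards [self_mem_nhdsWithin] with ε hε
          rw [uIcc_of_le ht0.le]
          exact ⟨by linarith [hε.1, hε.2], by linarith [hε.1]⟩
      exact hcw.tendsto.comp hg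
    have hRHS : Tendsto (fun ε : ℝ => L * ε ^ (1 - α) - t0 ^ (-α) * (y 0 - y t0)) l2
        (𝓝 (L * 0 - t0 ^ (-α) * (y 0 - y t0))) := by
      have hrp : Tendsto (fun ε : ℝ => ε ^ (1 - α)) l2 (𝓝 0) := by
        have hca : ContinuousAt (fun x : ℝ => x ^ (1 - α)) 0 :=
          Real.continuousAt_rpow_const 0 (1 - α) (Or.inr (by linarith))
        have h := hca.tendsto.mono_left (nhdsWithin_le_nhds : l2 ≤ 𝓝 0)
        simp only [Real.zero_rpow (show (1:ℝ) - α ≠ 0 by linarith)] at h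
        exact h
      exact (tendsto_const_nhds.mul hrp).sub tendsto_const_nhds
    have key2 : (∫ s in (0:ℝ)..t0, F s) ≤ L * 0 - t0 ^ (-α) * (y 0 - y t0) := by
      apply le_of_tendsto_of_tendsto hLHS hRHS
      filter_upwards [self_mem_nhdsWithin] with ε hε
      exact stepD ε hε
    have hring : t0 ^ (-α) * (y t0 - y 0) = -(t0 ^ (-α) * (y 0 - y t0)) := by ring
    rw [hring]
    linarith [key2]
  -- conclude
  unfold caputo
  have hΓ : 0 < Real.Gamma (1 - α) := Real.Gamma_pos_of_pos (by linarith)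
  have hΓ' : 0 ≤ 1 / Real.Gamma (1 - α) := by positivity
  exact mul_le_mul_of_nonneg_left hfinal hΓ'

/-- Minimum principle for the time-fractional diffusion equation with Robin
boundary data. -/
theorem caputo_robin_minimum_principle
    (a b T α σ0 σ1 β0 β1 : ℝ) (c : ℝ → ℝ) (f u ux uxx : ℝ → ℝ → ℝ)
    (hab : a < b) (hT : 0 < T) (hα : α ∈ Ioo (0:ℝ) 1)
    (hσ0 : 0 < σ0) (hσ1 : 0 < σ1) (hβ0 : β0 ≤ 0) (hβ1 : 0 ≤ β1)
    (hc : ∀ x ∈ Icc a b, 0 ≤ c x)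
    -- continuity of u on the closed rectangle
    (hu_cont : ContinuousOn (fun p : ℝ × ℝ => u p.1 p.2) (Icc a b ×ˢ Icc 0 T))
    -- C¹ in time on (0,T] with integrable time derivative
    (hu_t : ∀ x ∈ Icc a b, ∀ t ∈ Ioc 0 T, DifferentiableAt ℝ (u x) t)
    (hu_t' : ∀ x ∈ Icc a b, ContinuousOn (deriv (u x)) (Ioc 0 T))
    (hu_int : ∀ x ∈ Icc a b, IntervalIntegrable (deriv (u x)) volume 0 T)
    -- spatial derivatives: first derivative up to the boundary, second in (a,b)
    (hux : ∀ t ∈ Ioc 0 T, ∀ x ∈ Icc a b,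
      HasDerivWithinAt (fun z => u z t) (ux x t) (Icc a b) x)
    (huxx : ∀ t ∈ Ioc 0 T, ∀ x ∈ Ioo a b,
      HasDerivAt (fun z => ux z t) (uxx x t) x)
    (huxx_cont : ∀ t ∈ Ioc 0 T, ContinuousOn (fun z => uxx z t) (Ioo a b))
    -- the time-fractional diffusion equation
    (hpde : ∀ x ∈ Ioo a b, ∀ t ∈ Ioc 0 T,
      caputo α (u x) t = uxx x t - c x * u x t + f x t)
    -- sign assumptions on the data
    (hf : ∀ x ∈ Icc a b, ∀ t ∈ Icc 0 T, 0 ≤ f x t)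
    (hbc_a : ∀ t ∈ Ioc 0 T, 0 ≤ σ0 * u a t + β0 * ux a t)
    (hbc_b : ∀ t ∈ Ioc 0 T, 0 ≤ σ1 * u b t + β1 * ux b t) :
    ∀ x ∈ Icc a b, ∀ t ∈ Icc 0 T,
      min (sInf ((fun z => u z 0) '' Icc a b)) 0 ≤ u x t := by
  set m : ℝ := min (sInf ((fun z => u z 0) '' Icc a b)) 0 with hm_def
  by_contra hcon
  push_neg at hcon
  obtain ⟨x0, hx0, t0, ht0, hlt⟩ := hcon
  -- minimum of u over the compact rectangle
  have hrect : IsCompact (Icc a b ×ˢ Icc 0 T) := isCompact_Icc.prod isCompact_Icc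
  obtain ⟨⟨xs, ts⟩, hpmem, hpmin⟩ := hrect.exists_isMinOn ⟨(x0, t0), hx0, ht0⟩ hu_cont
  have hxs : xs ∈ Icc a b := hpmem.1
  have hts : ts ∈ Icc 0 T := hpmem.2
  have hmin2 : ∀ z ∈ Icc a b, ∀ s ∈ Icc 0 T, u xs ts ≤ u z s := by
    intro z hz s hs
    exact isMinOn_iff.mp hpmin (z, s) (Set.mk_mem_prod hz hs)
  have hval : u xs ts < m :=
    lt_of_le_of_lt (isMinOn_iff.mp hpmin (x0, t0) (Set.mk_mem_prod hx0 ht0)) hlt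
  -- continuity of the initial slice
  have hcont0 : ContinuousOn (fun z => u z 0) (Icc a b) := by
    have h : ContinuousOn ((fun p : ℝ × ℝ => u p.1 p.2) ∘ (fun z => (z, (0:ℝ))))
        (Icc a b) :=
      hu_cont.comp ((continuous_id.prodMk continuous_const).continuousOn)
        (fun z hz => ⟨hz, left_mem_Icc.mpr hT.le⟩)
    exact h
  have hm_le : ∀ z ∈ Icc a b, m ≤ u z 0 := by
    intro z hz
    refine le_trans (min_le_left _ _) (csInf_le ?_ ⟨z, hz, rfl⟩)
    exact (isCompact_Icc.image_of_continuousOn hcont0).bddBelow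
  -- the minimum is not at t = 0
  have hts0 : ts ≠ 0 := by
    intro h
    rw [h] at hval
    exact absurd (hm_le xs hxs) (not_le.mpr hval)
  have htsIoc : ts ∈ Ioc 0 T := ⟨lt_of_le_of_ne hts.1 (Ne.symm hts0), hts.2⟩
  have hum : u xs ts < 0 := lt_of_lt_of_le hval (min_le_right _ _)
  have hxmin : ∀ z ∈ Icc a b, u xs ts ≤ u z ts := fun z hz => hmin2 z hz ts hts
  -- case analysis on the position of xs
  rcases eq_or_lt_of_le hxs.1 with hxa | hxa
  · -- xs = a
    have hxa' : xs = a := hxa.symm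
    rw [hxa'] at hxmin hum
    have hd := hux ts htsIoc a (left_mem_Icc.mpr hab.le)
    have hdnn : 0 ≤ ux a ts := deriv_nonneg_at_left_min hab hd hxmin
    have hua : u a ts < 0 := hum
    have h1 : σ0 * u a ts < 0 := mul_neg_of_pos_of_neg hσ0 hua
    have h2 : β0 * ux a ts ≤ 0 := mul_nonpos_of_nonpos_of_nonneg hβ0 hdnn
    linarith [hbc_a ts htsIoc]
  rcases eq_or_lt_of_le hxs.2 with hxb | hxb
  swap
  · -- interior case: xs ∈ Ioo a b
    have hxIoo : xs ∈ Ioo a b := ⟨hxa, hxb⟩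
    -- apply Luchko's estimate to y = u xs
    have hy_cont : ContinuousOn (u xs) (Icc 0 ts) := by
      have h : ContinuousOn ((fun p : ℝ × ℝ => u p.1 p.2) ∘ (fun t => (xs, t)))
          (Icc 0 T) :=
        hu_cont.comp ((continuous_const.prodMk continuous_id).continuousOn)
          (fun t ht => ⟨hxs, ht⟩)
      have h2 : ((fun p : ℝ × ℝ => u p.1 p.2) ∘ (fun t => (xs, t))) = u xs := rfl
      rw [h2] at h
      exact h.mono (Icc_subset_Icc le_rfl hts.2)
    have hcap := caputo_le_at_min hα htsIoc.1 hy_cont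
      (fun t ht => hu_t xs hxs t ⟨ht.1, le_trans ht.2 hts.2⟩)
      ((hu_t' xs hxs).mono (fun t ht => ⟨ht.1, le_trans ht.2 hts.2⟩))
      ((hu_int xs hxs).mono_set (by
        rw [uIcc_of_le hts.1, uIcc_of_le hT.le]
        exact Icc_subset_Icc le_rfl hts.2))
      (fun s hs => hmin2 xs hxs s ⟨hs.1, le_trans hs.2 hts.2⟩)
    -- the right-hand side is strictly negative
    have hΓ : 0 < Real.Gamma (1 - α) := Real.Gamma_pos_of_pos (by linarith [hα.2])
    have htsp : 0 < ts ^ (-α) := Real.rpow_pos_of_pos htsIoc.1 _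
    have hsub : u xs ts - u xs 0 < 0 := by
      have := hm_le xs hxs
      linarith
    have hcapneg : caputo α (u xs) ts < 0 := by
      apply lt_of_le_of_lt hcap
      apply mul_neg_of_pos_of_neg (by positivity)
      exact mul_neg_of_pos_of_neg htsp hsub
    -- from the PDE, uxx xs ts < 0
    have hpde' := hpde xs hxIoo ts htsIoc
    have hcu : c xs * u xs ts ≤ 0 :=
      mul_nonpos_of_nonneg_of_nonpos (hc xs hxs) hum.le
    have hfnn : 0 ≤ f xs ts := hf xs hxs ts hts
    have huxxneg : uxx xs ts < 0 := by
      have : caputo α (u xs) ts = uxx xs ts - c xs * u xs ts + f xs ts := hpde'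
      linarith
    -- but the second derivative at an interior minimum is nonnegative
    have huxxnn : 0 ≤ uxx xs ts :=
      second_deriv_nonneg_at_interior_min hxIoo
        (fun z hz => hux ts htsIoc z hz) (huxx ts htsIoc xs hxIoo) hxmin
    linarith
  · -- xs = b
    rw [hxb] at hxmin hum
    have hd := hux ts htsIoc b (right_mem_Icc.mpr hab.le)
    have hdnp : ux b ts ≤ 0 := deriv_nonpos_at_right_min hab hd hxmin
    have hub : u b ts < 0 := hum
    have h1 : σ1 * u b ts < 0 := mul_neg_of_pos_of_neg hσ1 hub
    have h2 : β1 * ux b ts ≤ 0 := mul_nonpos_of_nonneg_of_nonpos hβ1 hdnp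
    linarith [hbc_b ts htsIoc]
end

section
/- Let u be a classical solution of the time-fractional diffusion problem ∂_t^α u = ∂_x²u − c(x)u + f on (a,b)×(0,T] with initial value u(x,0) = u₀(x) and homogeneous Robin boundary conditions σ₀u(a,t) + β₀u_x(a,t) = 0, σ₁u(b,t) + β₁u_x(b,t) = 0. Then the supremum norm of u on [a,b]×[0,T] satisfies ‖u‖_∞ ≤ ‖u₀‖_∞ + (T^α / Γ(1+α)) ‖f‖_∞. -/
open Set MeasureTheory intervalIntegral

lemma kernelInt {α t : ℝ} (hα0 : 0 < α) (hα1 : α < 1) (ht : 0 < t)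
    {h : ℝ → ℝ} (hint : IntervalIntegrable h volume 0 t)
    (hcont : ContinuousOn h (Ioc 0 t)) :
    IntervalIntegrable (fun s => (t - s) ^ (-α) * h s) volume 0 t := by
  have ht2 : (0:ℝ) < t / 2 := by linarith
  have h1 : IntervalIntegrable (fun s => (t - s) ^ (-α) * h s) volume 0 (t/2) := by
    refine IntervalIntegrable.continuousOn_mul ?_ ?_
    · exact hint.mono_set (by
        rw [uIcc_of_le ht2.le, uIcc_of_le ht.le]
        exact Icc_subset_Icc le_rfl (by linarith))
    · refine ContinuousOn.rpow_const ((continuous_const.sub continuous_id).continuousOn) ?_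
      intro x hx
      rw [uIcc_of_le ht2.le] at hx
      exact Or.inl (sub_ne_zero.mpr ((by nlinarith [hx.2] : x < t).ne'))
  have h2 : IntervalIntegrable (fun s => (t - s) ^ (-α) * h s) volume (t/2) t := by
    have hker : IntervalIntegrable (fun s : ℝ => (t - s) ^ (-α)) volume (t/2) t := by
      have h := (intervalIntegrable_rpow' (a := t/2) (b := 0) (by linarith : (-1:ℝ) < -α)).comp_sub_left t
      rw [show t - t/2 = t/2 by ring, sub_zero] at h
      exact h
    refine hker.mul_continuousOn (hcont.mono ?_)
    rw [uIcc_of_le (by linarith)]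
    exact fun x hx => ⟨lt_of_lt_of_le ht2 hx.1, hx.2⟩
  exact h1.trans h2

lemma beta_eval {α : ℝ} (hα0 : 0 < α) (hα1 : α < 1) :
    ∫ s in (0:ℝ)..1, s ^ (α - 1) * (1 - s) ^ (-α)
      = Real.Gamma α * Real.Gamma (1 - α) := by
  have h2 : (0:ℝ) < 1 - α := by linarith
  have key := Complex.Gamma_mul_Gamma_eq_betaIntegral
      (s := (α : ℂ)) (t := ((1 - α : ℝ) : ℂ)) (by simpa using hα0) (by simpa using h2)
  have hsum : ((α : ℂ) + ((1 - α : ℝ) : ℂ)) = 1 := by push_cast; ring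
  rw [hsum, Complex.Gamma_one, one_mul] at key
  have hbeta : Complex.betaIntegral (α : ℂ) ((1 - α : ℝ) : ℂ)
      = ((∫ s in (0:ℝ)..1, s ^ (α - 1) * (1 - s) ^ (-α) : ℝ) : ℂ) := by
    rw [Complex.betaIntegral, ← intervalIntegral.integral_ofReal]
    refine intervalIntegral.integral_congr fun x hx => ?_
    rw [uIcc_of_le zero_le_one] at hx
    have e1 : ((x : ℝ) ^ (α - 1) : ℝ) = ‖(0:ℂ)‖ ∨ True := Or.inr trivial
    push_cast
    rw [Complex.ofReal_cpow hx.1, Complex.ofReal_cpow (by linarith [hx.2] : (0:ℝ) ≤ 1 - x)]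
    push_cast
    ring_nf
  rw [hbeta] at key
  have : ((Real.Gamma α * Real.Gamma (1 - α) : ℝ) : ℂ)
      = ((∫ s in (0:ℝ)..1, s ^ (α - 1) * (1 - s) ^ (-α) : ℝ) : ℂ) := by
    rw [← key]; push_cast [← Complex.Gamma_ofReal]; norm_num
  exact_mod_cast this.symm

lemma caputo_kernel_rpow {α t : ℝ} (hα0 : 0 < α) (hα1 : α < 1) (ht : 0 < t) :
    ∫ s in (0:ℝ)..t, (t - s) ^ (-α) * (α * s ^ (α - 1))
      = Real.Gamma (1 - α) * Real.Gamma (1 + α) := by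
  have hmain : ∫ s in (0:ℝ)..t, (t - s) ^ (-α) * s ^ (α - 1)
      = Real.Gamma α * Real.Gamma (1 - α) := by
    have hsub := intervalIntegral.integral_comp_mul_left
        (a := (0:ℝ)) (b := 1) (c := t)
        (f := fun s => (t - s) ^ (-α) * s ^ (α - 1)) ht.ne'
    -- hsub : ∫ x in 0..1, f (t * x) = t⁻¹ • ∫ x in t*0..t*1, f x
    rw [mul_zero, mul_one] at hsub
    have hpt : ∀ x ∈ uIcc (0:ℝ) 1,
        (t - t * x) ^ (-α) * (t * x) ^ (α - 1)
          = t⁻¹ * (x ^ (α - 1) * (1 - x) ^ (-α)) := by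
      intro x hx
      rw [uIcc_of_le zero_le_one] at hx
      have hx0 : (0:ℝ) ≤ x := hx.1
      have hx1 : (0:ℝ) ≤ 1 - x := by linarith [hx.2]
      have e1 : t - t * x = t * (1 - x) := by ring
      rw [e1, Real.mul_rpow ht.le hx1, Real.mul_rpow ht.le hx0]
      have e2 : t ^ (-α) * t ^ (α - 1) = t⁻¹ := by
        rw [← Real.rpow_add ht, show -α + (α - 1) = -1 by ring, Real.rpow_neg_one]
      calc t ^ (-α) * (1 - x) ^ (-α) * (t ^ (α - 1) * x ^ (α - 1))
          = (t ^ (-α) * t ^ (α - 1)) * (x ^ (α - 1) * (1 - x) ^ (-α)) := by ring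
        _ = t⁻¹ * (x ^ (α - 1) * (1 - x) ^ (-α)) := by rw [e2]
    rw [intervalIntegral.integral_congr hpt] at hsub
    rw [intervalIntegral.integral_const_mul] at hsub
    rw [beta_eval hα0 hα1, smul_eq_mul] at hsub
    have := mul_left_cancel₀ (inv_ne_zero ht.ne') hsub
    simpa using this.symm
  have e : ∫ s in (0:ℝ)..t, (t - s) ^ (-α) * (α * s ^ (α - 1))
      = α * ∫ s in (0:ℝ)..t, (t - s) ^ (-α) * s ^ (α - 1) := by
    rw [← intervalIntegral.integral_const_mul]
    exact intervalIntegral.integral_congr fun s _ => by ring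
  rw [e, hmain, show (1:ℝ) + α = α + 1 by ring, Real.Gamma_add_one hα0.ne']
  ring

lemma rpow_helper {x α : ℝ} (hx : 0 < x) : x ^ (-α) * x = x ^ (1 - α) := by
  rw [show (1 - α) = -α + 1 by ring, Real.rpow_add hx, Real.rpow_one]

lemma caputo_max_lower {α t₀ : ℝ} (hα0 : 0 < α) (hα1 : α < 1) (ht₀ : 0 < t₀)
    {y : ℝ → ℝ}
    (hyc : ContinuousOn y (Icc 0 t₀))
    (hyd : ∀ s ∈ Ioc 0 t₀, HasDerivAt y (deriv y s) s)
    (hyd' : ContinuousOn (deriv y) (Ioc 0 t₀))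
    (hyint : IntervalIntegrable (deriv y) volume 0 t₀)
    (hmax : ∀ s ∈ Icc 0 t₀, y s ≤ y t₀) :
    t₀ ^ (-α) * (y t₀ - y 0) ≤ ∫ s in (0:ℝ)..t₀, (t₀ - s) ^ (-α) * deriv y s := by
  have hK : IntervalIntegrable (fun s => (t₀ - s) ^ (-α) * deriv y s) volume 0 t₀ :=
    kernelInt hα0 hα1 ht₀ hyint hyd'
  have hconst : IntervalIntegrable (fun s => t₀ ^ (-α) * deriv y s) volume 0 t₀ :=
    hyint.const_mul _
  have hk : IntervalIntegrable
      (fun s => ((t₀ - s) ^ (-α) - t₀ ^ (-α)) * deriv y s) volume 0 t₀ := by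
    have := hK.sub hconst
    simpa [sub_mul] using this
  have hFTC : ∫ s in (0:ℝ)..t₀, deriv y s = y t₀ - y 0 :=
    integral_eq_sub_of_hasDerivAt_of_le ht₀.le hyc
      (fun s hs => hyd s ⟨hs.1, hs.2.le⟩) hyint
  have hsplit : ∫ s in (0:ℝ)..t₀, (t₀ - s) ^ (-α) * deriv y s
      = (∫ s in (0:ℝ)..t₀, ((t₀ - s) ^ (-α) - t₀ ^ (-α)) * deriv y s)
        + t₀ ^ (-α) * (y t₀ - y 0) := by
    rw [← hFTC, ← intervalIntegral.integral_const_mul,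
      ← intervalIntegral.integral_add hk hconst]
    exact intervalIntegral.integral_congr fun s _ => by ring
  rw [hsplit, le_add_iff_nonneg_left]
  -- bound for deriv y near t₀
  obtain ⟨C, hC⟩ := (isCompact_Icc (a := t₀/2) (b := t₀)).exists_bound_of_continuousOn
      (hyd'.mono (fun s hs => ⟨by linarith [hs.1], hs.2⟩))
  have hC0 : 0 ≤ C := le_trans (norm_nonneg _) (hC t₀ ⟨by linarith, le_rfl⟩)
  -- step estimate on [0, τ]
  have step : ∀ τ ∈ Ico (0:ℝ) t₀,
      ((t₀ - τ) ^ (-α) - t₀ ^ (-α)) * (y τ - y t₀)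
        ≤ ∫ s in (0:ℝ)..τ, ((t₀ - s) ^ (-α) - t₀ ^ (-α)) * deriv y s := by
    intro τ hτ
    set g : ℝ → ℝ := fun s => ((t₀ - s) ^ (-α) - t₀ ^ (-α)) * deriv y s with hg
    set H : ℝ → ℝ := fun r => (∫ s in (0:ℝ)..r, g s)
        - ((t₀ - r) ^ (-α) - t₀ ^ (-α)) * (y r - y t₀) with hH
    have hsub0τ : uIcc (0:ℝ) τ ⊆ uIcc (0:ℝ) t₀ := by
      rw [uIcc_of_le hτ.1, uIcc_of_le ht₀.le]
      exact Icc_subset_Icc le_rfl hτ.2.le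
    have hkint' : IntervalIntegrable g volume 0 τ := hk.mono_set hsub0τ
    have hGcont : ContinuousOn (fun r => ∫ s in (0:ℝ)..r, g s) (Icc 0 τ) := by
      have := intervalIntegral.continuousOn_primitive_interval'
          (μ := volume) hkint' (left_mem_uIcc)
      rwa [uIcc_of_le hτ.1] at this
    have hkcont : ContinuousOn (fun r : ℝ => (t₀ - r) ^ (-α) - t₀ ^ (-α)) (Icc 0 τ) := by
      refine ContinuousOn.sub ?_ continuousOn_const
      refine ContinuousOn.rpow_const ((continuous_const.sub continuous_id).continuousOn) ?_
      intro x hx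
      exact Or.inl (sub_ne_zero.mpr ((lt_of_le_of_lt hx.2 hτ.2).ne'))
    have hHcont : ContinuousOn H (Icc 0 τ) :=
      hGcont.sub (hkcont.mul (((hyc.mono (Icc_subset_Icc le_rfl hτ.2.le)).sub
        continuousOn_const)))
    have hgcont : ContinuousOn g (Ioo 0 t₀) := by
      refine ContinuousOn.mul ?_ (hyd'.mono Ioo_subset_Ioc_self)
      refine ContinuousOn.sub ?_ continuousOn_const
      refine ContinuousOn.rpow_const ((continuous_const.sub continuous_id).continuousOn) ?_
      intro x hx
      exact Or.inl (sub_ne_zero.mpr hx.2.ne')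
    have hHderiv : ∀ r ∈ Ioo 0 τ,
        HasDerivAt H (-(α * (t₀ - r) ^ (-α - 1)) * (y r - y t₀)) r := by
      intro r hr
      have hrt : r < t₀ := lt_trans hr.2 hτ.2
      have hrIoo : r ∈ Ioo (0:ℝ) t₀ := ⟨hr.1, hrt⟩
      have hG : HasDerivAt (fun r => ∫ s in (0:ℝ)..r, g s) (g r) r := by
        refine intervalIntegral.integral_hasDerivAt_right
          (hk.mono_set ?_)
          (hgcont.stronglyMeasurableAtFilter isOpen_Ioo r hrIoo)
          (hgcont.continuousAt (isOpen_Ioo.mem_nhds hrIoo))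
        rw [uIcc_of_le hr.1.le, uIcc_of_le ht₀.le]
        exact Icc_subset_Icc le_rfl hrt.le
      have h1 : HasDerivAt (fun r : ℝ => t₀ - r) (-1) r := by
        simpa using (hasDerivAt_id r).const_sub t₀
      have h2 : HasDerivAt (fun r : ℝ => (t₀ - r) ^ (-α))
          (α * (t₀ - r) ^ (-α - 1)) r := by
        have := (Real.hasDerivAt_rpow_const (x := t₀ - r) (p := -α)
          (Or.inl (sub_ne_zero.mpr hrt.ne'))).comp r h1
        exact this.congr_deriv (by ring)
      have hkd : HasDerivAt (fun r : ℝ => (t₀ - r) ^ (-α) - t₀ ^ (-α))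
          (α * (t₀ - r) ^ (-α - 1)) r := h2.sub_const _
      have hyr : HasDerivAt y (deriv y r) r := hyd r ⟨hr.1, hrt.le⟩
      have := hG.sub (hkd.mul (hyr.sub_const (y t₀)))
      exact this.congr_deriv (by simp only [hg]; ring)
    have hmono : MonotoneOn H (Icc 0 τ) := by
      refine monotoneOn_of_deriv_nonneg (convex_Icc 0 τ) hHcont ?_ ?_
      · intro r hr
        rw [interior_Icc] at hr
        exact ((hHderiv r hr).differentiableAt).differentiableWithinAt
      · intro r hr
        rw [interior_Icc] at hr
        rw [(hHderiv r hr).deriv]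
        have h1 : 0 ≤ α * (t₀ - r) ^ (-α - 1) := by
          have : (0:ℝ) < t₀ - r := by
            have : r < t₀ := lt_trans hr.2 hτ.2
            linarith
          positivity
        have h2 : y r - y t₀ ≤ 0 := sub_nonpos.2
          (hmax r ⟨hr.1.le, (lt_trans hr.2 hτ.2).le⟩)
        nlinarith
    have h0 : H 0 = 0 := by
      simp [hH]
    have hle := hmono (left_mem_Icc.2 hτ.1) (right_mem_Icc.2 hτ.1) hτ.1
    rw [h0] at hle
    simp only [hH] at hle
    linarith
  -- tail estimate and limit
  set I : ℝ := ∫ s in (0:ℝ)..t₀, ((t₀ - s) ^ (-α) - t₀ ^ (-α)) * deriv y s with hI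
  have key : ∀ τ ∈ Ico (t₀/2) t₀,
      -(C * (t₀ - τ) ^ (1 - α)
        + (C * ((t₀ - τ) ^ (1 - α) / (1 - α)) + C * t₀ ^ (-α) * (t₀ - τ))) ≤ I := by
    intro τ hτ
    have hτ0 : (0:ℝ) ≤ τ := le_trans (by linarith) hτ.1
    have hτt : τ < t₀ := hτ.2
    have hsub1 : uIcc (0:ℝ) τ ⊆ uIcc (0:ℝ) t₀ := by
      rw [uIcc_of_le hτ0, uIcc_of_le ht₀.le]; exact Icc_subset_Icc le_rfl hτt.le
    have hsub2 : uIcc τ t₀ ⊆ uIcc (0:ℝ) t₀ := by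
      rw [uIcc_of_le hτt.le, uIcc_of_le ht₀.le]; exact Icc_subset_Icc hτ0 le_rfl
    have hadj : (∫ s in (0:ℝ)..τ, ((t₀ - s) ^ (-α) - t₀ ^ (-α)) * deriv y s)
        + (∫ s in τ..t₀, ((t₀ - s) ^ (-α) - t₀ ^ (-α)) * deriv y s) = I :=
      intervalIntegral.integral_add_adjacent_intervals
        (hk.mono_set hsub1) (hk.mono_set hsub2)
    -- front piece
    have hyd2 : ∀ s ∈ Ioo τ t₀, HasDerivAt y (deriv y s) s := fun s hs =>
      hyd s ⟨lt_of_le_of_lt (by linarith [hτ.1]) hs.1, hs.2.le⟩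
    have hFTC2 : ∫ s in τ..t₀, deriv y s = y t₀ - y τ :=
      integral_eq_sub_of_hasDerivAt_of_le hτt.le
        (hyc.mono (Icc_subset_Icc hτ0 le_rfl)) hyd2 (hyint.mono_set hsub2)
    have hybound : |y τ - y t₀| ≤ C * (t₀ - τ) := by
      have hnorm := intervalIntegral.norm_integral_le_of_norm_le_const
        (C := C) (f := deriv y) (a := τ) (b := t₀) ?_
      · rw [hFTC2] at hnorm
        rw [abs_sub_comm]
        calc |y t₀ - y τ| ≤ C * |t₀ - τ| := hnorm
          _ = C * (t₀ - τ) := by rw [abs_of_nonneg (by linarith)]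
      · intro x hx
        rw [uIoc_of_le hτt.le] at hx
        exact hC x ⟨le_trans hτ.1 hx.1.le, hx.2⟩
    have hk_nonneg : 0 ≤ (t₀ - τ) ^ (-α) - t₀ ^ (-α) := by
      rw [sub_nonneg]
      apply Real.rpow_le_rpow_of_nonpos (by linarith) (by linarith) (by linarith)
    have hk_le : (t₀ - τ) ^ (-α) - t₀ ^ (-α) ≤ (t₀ - τ) ^ (-α) := by
      have : 0 ≤ t₀ ^ (-α) := Real.rpow_nonneg ht₀.le _
      linarith
    have hfront : -(C * (t₀ - τ) ^ (1 - α))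
        ≤ ∫ s in (0:ℝ)..τ, ((t₀ - s) ^ (-α) - t₀ ^ (-α)) * deriv y s := by
      refine le_trans ?_ (step τ ⟨hτ0, hτt⟩)
      have habs : |((t₀ - τ) ^ (-α) - t₀ ^ (-α)) * (y τ - y t₀)|
          ≤ (t₀ - τ) ^ (-α) * (C * (t₀ - τ)) := by
        rw [abs_mul, abs_of_nonneg hk_nonneg]
        exact mul_le_mul hk_le hybound (abs_nonneg _)
          (Real.rpow_nonneg (by linarith) _)
      have : (t₀ - τ) ^ (-α) * (C * (t₀ - τ)) = C * (t₀ - τ) ^ (1 - α) := by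
        rw [show (t₀ - τ) ^ (-α) * (C * (t₀ - τ)) = C * ((t₀ - τ) ^ (-α) * (t₀ - τ)) by ring,
          rpow_helper (by linarith : (0:ℝ) < t₀ - τ)]
      rw [this] at habs
      have := neg_abs_le (((t₀ - τ) ^ (-α) - t₀ ^ (-α)) * (y τ - y t₀))
      linarith [abs_le.mp habs]
    -- tail piece
    have hker_int : IntervalIntegrable (fun s : ℝ => (t₀ - s) ^ (-α)) volume τ t₀ := by
      have h := (intervalIntegrable_rpow' (a := t₀ - τ) (b := 0)
        (by linarith : (-1:ℝ) < -α)).comp_sub_left t₀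
      rw [show t₀ - (t₀ - τ) = τ by ring, sub_zero] at h
      exact h
    have hJ : ∫ s in τ..t₀, (t₀ - s) ^ (-α) = (t₀ - τ) ^ (1 - α) / (1 - α) := by
      rw [intervalIntegral.integral_comp_sub_left (fun x : ℝ => x ^ (-α)) t₀]
      rw [sub_self]
      rw [integral_rpow (Or.inl (by linarith : (-1:ℝ) < -α))]
      rw [Real.zero_rpow (by intro hc; linarith [hc] : -α + 1 ≠ 0)]
      ring_nf
    have htail : |∫ s in τ..t₀, ((t₀ - s) ^ (-α) - t₀ ^ (-α)) * deriv y s|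
        ≤ C * ((t₀ - τ) ^ (1 - α) / (1 - α)) + C * t₀ ^ (-α) * (t₀ - τ) := by
      have hbd : ∀ x ∈ Icc τ t₀,
          ‖((t₀ - x) ^ (-α) - t₀ ^ (-α)) * deriv y x‖
            ≤ C * (t₀ - x) ^ (-α) + C * t₀ ^ (-α) := by
        intro x hx
        have h1 : ‖deriv y x‖ ≤ C := hC x ⟨le_trans hτ.1 hx.1, hx.2⟩
        have h2 : |(t₀ - x) ^ (-α) - t₀ ^ (-α)|
            ≤ (t₀ - x) ^ (-α) + t₀ ^ (-α) := by
          refine le_trans (abs_sub _ _) ?_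
          rw [abs_of_nonneg (Real.rpow_nonneg (by linarith [hx.2]) _),
            abs_of_nonneg (Real.rpow_nonneg ht₀.le _)]
        calc ‖((t₀ - x) ^ (-α) - t₀ ^ (-α)) * deriv y x‖
            = |(t₀ - x) ^ (-α) - t₀ ^ (-α)| * ‖deriv y x‖ := by
              rw [norm_mul]; rfl
          _ ≤ ((t₀ - x) ^ (-α) + t₀ ^ (-α)) * C := by
              refine mul_le_mul h2 h1 (norm_nonneg _) ?_
              exact add_nonneg (Real.rpow_nonneg (by linarith [hx.2]) _)
                (Real.rpow_nonneg ht₀.le _)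
          _ = C * (t₀ - x) ^ (-α) + C * t₀ ^ (-α) := by ring
      have hbint : IntervalIntegrable
          (fun x : ℝ => C * (t₀ - x) ^ (-α) + C * t₀ ^ (-α)) volume τ t₀ :=
        (hker_int.const_mul C).add intervalIntegrable_const
      have hae : ∀ᵐ x ∂(volume.restrict (uIoc τ t₀)),
          ‖((t₀ - x) ^ (-α) - t₀ ^ (-α)) * deriv y x‖
            ≤ C * (t₀ - x) ^ (-α) + C * t₀ ^ (-α) := by
        refine (ae_restrict_iff' measurableSet_uIoc).2 (ae_of_all _ fun x hx => ?_)
        rw [uIoc_of_le hτt.le] at hx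
        exact hbd x ⟨hx.1.le, hx.2⟩
      have := intervalIntegral.norm_integral_le_abs_of_norm_le
        (f := fun s => ((t₀ - s) ^ (-α) - t₀ ^ (-α)) * deriv y s)
        (g := fun x : ℝ => C * (t₀ - x) ^ (-α) + C * t₀ ^ (-α)) hae hbint
      have heval : ∫ x in τ..t₀, (C * (t₀ - x) ^ (-α) + C * t₀ ^ (-α))
          = C * ((t₀ - τ) ^ (1 - α) / (1 - α)) + C * t₀ ^ (-α) * (t₀ - τ) := by
        rw [intervalIntegral.integral_add (hker_int.const_mul C)
          intervalIntegrable_const,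
          intervalIntegral.integral_const_mul, hJ,
          intervalIntegral.integral_const, smul_eq_mul]
        ring
      rw [heval] at this
      calc |∫ s in τ..t₀, ((t₀ - s) ^ (-α) - t₀ ^ (-α)) * deriv y s|
          ≤ |C * ((t₀ - τ) ^ (1 - α) / (1 - α)) + C * t₀ ^ (-α) * (t₀ - τ)| := this
        _ = C * ((t₀ - τ) ^ (1 - α) / (1 - α)) + C * t₀ ^ (-α) * (t₀ - τ) := by
            rw [abs_of_nonneg]
            have h1 : 0 ≤ (t₀ - τ) ^ (1 - α) := Real.rpow_nonneg (by linarith) _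
            have h2 : 0 ≤ t₀ ^ (-α) := Real.rpow_nonneg ht₀.le _
            have h3 : (0:ℝ) < 1 - α := by linarith
            have h4 : (0:ℝ) ≤ t₀ - τ := by linarith
            have h5 := div_nonneg h1 h3.le
            nlinarith [mul_nonneg hC0 h5, mul_nonneg (mul_nonneg hC0 h2) h4]
    -- combine
    have h1 := hfront
    have h2 := abs_le.mp htail
    linarith [hadj, h2.1]
  -- pass to the limit τ → t₀⁻
  have hlim : Filter.Tendsto
      (fun τ => -(C * (t₀ - τ) ^ (1 - α)
        + (C * ((t₀ - τ) ^ (1 - α) / (1 - α)) + C * t₀ ^ (-α) * (t₀ - τ))))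
      (nhdsWithin t₀ (Iio t₀)) (nhds 0) := by
    have hb : Filter.Tendsto (fun τ : ℝ => t₀ - τ) (nhds t₀) (nhds 0) := by
      have h := ((continuous_const.sub continuous_id).tendsto t₀ :
        Filter.Tendsto (fun τ : ℝ => t₀ - τ) (nhds t₀) (nhds (t₀ - t₀)))
      have h2 : Filter.Tendsto (fun τ : ℝ => t₀ - τ) (nhds t₀) (nhds (t₀ - t₀)) := h
      rwa [sub_self] at h2
    have hp : Filter.Tendsto (fun τ : ℝ => (t₀ - τ) ^ (1 - α)) (nhds t₀) (nhds 0) := by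
      have hc : ContinuousAt (fun x : ℝ => x ^ (1 - α)) 0 :=
        Real.continuousAt_rpow_const 0 (1 - α) (Or.inr (by linarith))
      have := hc.tendsto.comp hb
      rwa [Real.zero_rpow (by intro hc'; linarith [hc'] : (1:ℝ) - α ≠ 0)] at this
    have : Filter.Tendsto
        (fun τ => -(C * (t₀ - τ) ^ (1 - α)
          + (C * ((t₀ - τ) ^ (1 - α) / (1 - α)) + C * t₀ ^ (-α) * (t₀ - τ))))
        (nhds t₀) (nhds (-(C * 0 + (C * (0 / (1 - α)) + C * t₀ ^ (-α) * 0)))) := by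
      exact (((hp.const_mul C).add
        (((hp.div_const (1 - α)).const_mul C).add (hb.const_mul (C * t₀ ^ (-α))))).neg)
    rw [show -(C * 0 + (C * (0 / (1 - α)) + C * t₀ ^ (-α) * 0)) = 0 by ring] at this
    exact this.mono_left nhdsWithin_le_nhds
  have hev : ∀ᶠ τ in nhdsWithin t₀ (Iio t₀),
      -(C * (t₀ - τ) ^ (1 - α)
        + (C * ((t₀ - τ) ^ (1 - α) / (1 - α)) + C * t₀ ^ (-α) * (t₀ - τ))) ≤ I := by
    have hmem : Ico (t₀/2) t₀ ∈ nhdsWithin t₀ (Iio t₀) :=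
      Ico_mem_nhdsLT_of_mem ⟨by linarith, le_rfl⟩
    filter_upwards [hmem] with τ hτ using key τ hτ
  exact le_of_tendsto hlim hev

lemma caputo_neg (α : ℝ) (y : ℝ → ℝ) (t : ℝ) :
    caputo α (fun s => -(y s)) t = -caputo α y t := by
  have hd : ∀ s, deriv (fun s => -(y s)) s = -(deriv y s) := fun s => deriv.neg
  simp only [caputo]
  rw [show (∫ s in (0:ℝ)..t, (t - s) ^ (-α) * deriv (fun s => -(y s)) s)
      = ∫ s in (0:ℝ)..t, -((t - s) ^ (-α) * deriv y s) from
    intervalIntegral.integral_congr fun s _ => by rw [hd s]; ring]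
  rw [intervalIntegral.integral_neg]
  ring

set_option maxHeartbeats 1000000 in
lemma one_sided
    (a b T α σ0 σ1 β0 β1 : ℝ) (c : ℝ → ℝ) (f u ux uxx : ℝ → ℝ → ℝ)
    (hab : a < b) (hT : 0 < T) (hα : α ∈ Ioo (0:ℝ) 1)
    (hσ0 : 0 < σ0) (hσ1 : 0 < σ1) (hβ0 : β0 ≤ 0) (hβ1 : 0 ≤ β1)
    (hc : ∀ x ∈ Icc a b, 0 ≤ c x)
    (hu_cont : ContinuousOn (fun p : ℝ × ℝ => u p.1 p.2) (Icc a b ×ˢ Icc 0 T))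
    (hu_t : ∀ x ∈ Icc a b, ∀ t ∈ Ioc 0 T, DifferentiableAt ℝ (u x) t)
    (hu_t' : ∀ x ∈ Icc a b, ContinuousOn (deriv (u x)) (Ioc 0 T))
    (hu_int : ∀ x ∈ Icc a b, IntervalIntegrable (deriv (u x)) volume 0 T)
    (hux : ∀ t ∈ Ioc 0 T, ∀ x ∈ Icc a b,
      HasDerivWithinAt (fun z => u z t) (ux x t) (Icc a b) x)
    (huxx : ∀ t ∈ Ioc 0 T, ∀ x ∈ Ioo a b,
      HasDerivAt (fun z => ux z t) (uxx x t) x)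
    (hpde : ∀ x ∈ Ioo a b, ∀ t ∈ Ioc 0 T,
      caputo α (u x) t = uxx x t - c x * u x t + f x t)
    (hbc_a : ∀ t ∈ Ioc 0 T, σ0 * u a t + β0 * ux a t = 0)
    (hbc_b : ∀ t ∈ Ioc 0 T, σ1 * u b t + β1 * ux b t = 0)
    (M0 F : ℝ) (hM0 : 0 ≤ M0) (hF : 0 ≤ F)
    (hinit' : ∀ x ∈ Icc a b, u x 0 ≤ M0)
    (hfF : ∀ x ∈ Icc a b, ∀ t ∈ Icc 0 T, f x t ≤ F) :
    ∀ x ∈ Icc a b, ∀ t ∈ Icc 0 T,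
      u x t ≤ M0 + T ^ α / Real.Gamma (1 + α) * F := by
  obtain ⟨hα0, hα1⟩ := hα
  set Γα := Real.Gamma (1 + α) with hΓα
  have hΓαpos : 0 < Γα := Real.Gamma_pos_of_pos (by linarith)
  have hΓ1pos : 0 < Real.Gamma (1 - α) := Real.Gamma_pos_of_pos (by linarith)
  have hrpow_cont : Continuous (fun t : ℝ => t ^ α) := by
    rw [continuous_iff_continuousAt]
    exact fun t => Real.continuousAt_rpow_const t α (Or.inr hα0.le)
  set φ : ℝ → ℝ := fun t => M0 + F / Γα * t ^ α with hφ
  have hφcont : Continuous φ := continuous_const.add (continuous_const.mul hrpow_cont)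
  have hφ0 : φ 0 = M0 := by
    simp [hφ, Real.zero_rpow hα0.ne']
  have hφnonneg : ∀ t : ℝ, 0 ≤ t → 0 ≤ φ t := by
    intro t ht
    have : 0 ≤ F / Γα * t ^ α :=
      mul_nonneg (div_nonneg hF hΓαpos.le) (Real.rpow_nonneg ht _)
    simp only [hφ]; linarith
  set W : ℝ × ℝ → ℝ := fun p => u p.1 p.2 - φ p.2 with hWdef
  have hWcont : ContinuousOn W (Icc a b ×ˢ Icc 0 T) :=
    hu_cont.sub ((hφcont.comp continuous_snd).continuousOn)
  have hSne : (Icc a b ×ˢ Icc 0 T).Nonempty :=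
    ⟨(a, 0), mk_mem_prod (left_mem_Icc.2 hab.le) (left_mem_Icc.2 hT.le)⟩
  obtain ⟨p₀, hp₀S, hp₀max'⟩ :=
    (isCompact_Icc.prod isCompact_Icc).exists_isMaxOn hSne hWcont
  have hp₀max : ∀ p ∈ Icc a b ×ˢ Icc 0 T, W p ≤ W p₀ := isMaxOn_iff.mp hp₀max'
  obtain ⟨hx₀, ht₀⟩ := (mem_prod.mp hp₀S)
  set x₀ := p₀.1 with hx₀def
  set t₀ := p₀.2 with ht₀def
  have hWp : W p₀ = u x₀ t₀ - φ t₀ := rfl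
  -- reduce to W p₀ ≤ 0
  have hmain : W p₀ ≤ 0 → ∀ x ∈ Icc a b, ∀ t ∈ Icc 0 T,
      u x t ≤ M0 + T ^ α / Γα * F := by
    intro hW0 x hx t ht
    have h1 : u x t - φ t ≤ W p₀ := hp₀max (x, t) (mk_mem_prod hx ht)
    have hTα : t ^ α ≤ T ^ α := Real.rpow_le_rpow ht.1 ht.2 hα0.le
    have h3 := mul_le_mul_of_nonneg_left hTα (div_nonneg hF hΓαpos.le)
    have heq : T ^ α / Γα * F = F / Γα * T ^ α := by ring
    have hφt : φ t = M0 + F / Γα * t ^ α := rfl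
    have hfinal : u x t ≤ M0 + F / Γα * T ^ α := by
      clear_value W φ Γα x₀ t₀
      linarith
    rw [heq]
    exact hfinal
  refine hmain ?_
  by_contra hM
  push_neg at hM
  have umax : ∀ z ∈ Icc a b, ∀ s ∈ Icc 0 T, u z s - φ s ≤ u x₀ t₀ - φ t₀ :=
    fun z hz s hs => hp₀max (z, s) (mk_mem_prod hz hs)
  have ht₀pos : 0 < t₀ := by
    rcases eq_or_lt_of_le ht₀.1 with h | h
    · exfalso
      rw [hWp, ← h, hφ0] at hM
      linarith [hinit' x₀ hx₀]
    · exact h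
  have ht₀' : t₀ ∈ Ioc 0 T := ⟨ht₀pos, ht₀.2⟩
  rw [hWp] at hM
  have hupos : 0 < u x₀ t₀ := by
    have := hφnonneg t₀ ht₀.1
    linarith
  have hslice_x : ∀ t ∈ Icc (0:ℝ) T, ContinuousOn (fun z => u z t) (Icc a b) := by
    intro t ht
    exact hu_cont.comp ((continuous_id.prodMk continuous_const).continuousOn)
      (fun z hz => mk_mem_prod hz ht)
  have umaxt : ∀ z ∈ Icc a b, u z t₀ ≤ u x₀ t₀ := by
    intro z hz
    have := umax z hz t₀ ht₀
    linarith
  rcases eq_or_ne x₀ a with hxa | hxa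
  · -- boundary x = a
    have hdw : HasDerivWithinAt (fun z => u z t₀) (ux a t₀) (Icc a b) a :=
      hux t₀ ht₀' a ⟨le_rfl, hab.le⟩
    have hmaxOn : IsMaxOn (fun z => u z t₀) (Icc a b) a := by
      refine isMaxOn_iff.mpr fun z hz => ?_
      rw [← hxa]
      exact umaxt z hz
    have hcone : (b - a) ∈ posTangentConeAt (Icc a b) a := by
      refine mem_posTangentConeAt_of_segment_subset ?_
      rw [show a + (b - a) = b by ring, segment_eq_Icc hab.le]
    have hnp := hmaxOn.localize.hasFDerivWithinAt_nonpos hdw.hasFDerivWithinAt hcone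
    simp only [ContinuousLinearMap.toSpanSingleton_apply, ContinuousLinearMap.smulRight_apply, ContinuousLinearMap.one_apply,
      smul_eq_mul] at hnp
    have huxnp : ux a t₀ ≤ 0 := by nlinarith [hnp]
    have hbc := hbc_a t₀ ht₀'
    have huapos : 0 < u a t₀ := by rw [← hxa]; exact hupos
    nlinarith [mul_nonneg (neg_nonneg.2 hβ0) (neg_nonneg.2 huxnp), mul_pos hσ0 huapos]
  rcases eq_or_ne x₀ b with hxb | hxb
  · -- boundary x = b
    have hdw : HasDerivWithinAt (fun z => u z t₀) (ux b t₀) (Icc a b) b :=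
      hux t₀ ht₀' b ⟨hab.le, le_rfl⟩
    have hmaxOn : IsMaxOn (fun z => u z t₀) (Icc a b) b := by
      refine isMaxOn_iff.mpr fun z hz => ?_
      rw [← hxb]
      exact umaxt z hz
    have hcone : (a - b) ∈ posTangentConeAt (Icc a b) b := by
      refine mem_posTangentConeAt_of_segment_subset ?_
      rw [show b + (a - b) = a by ring, segment_symm, segment_eq_Icc hab.le]
    have hnp := hmaxOn.localize.hasFDerivWithinAt_nonpos hdw.hasFDerivWithinAt hcone
    simp only [ContinuousLinearMap.toSpanSingleton_apply, ContinuousLinearMap.smulRight_apply, ContinuousLinearMap.one_apply,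
      smul_eq_mul] at hnp
    have huxnn : 0 ≤ ux b t₀ := by nlinarith [hnp]
    have hbc := hbc_b t₀ ht₀'
    have hubpos : 0 < u b t₀ := by rw [← hxb]; exact hupos
    nlinarith [mul_nonneg hβ1 huxnn, mul_pos hσ1 hubpos]
  -- interior case
  have hx0i : x₀ ∈ Ioo a b :=
    ⟨lt_of_le_of_ne hx₀.1 (Ne.symm hxa), lt_of_le_of_ne hx₀.2 hxb⟩
  have hdx : HasDerivAt (fun z => u z t₀) (ux x₀ t₀) x₀ :=
    (hux t₀ ht₀' x₀ hx₀).hasDerivAt (Icc_mem_nhds hx0i.1 hx0i.2)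
  have hlocmax : IsLocalMax (fun z => u z t₀) x₀ := by
    filter_upwards [Icc_mem_nhds hx0i.1 hx0i.2] with z hz using umaxt z hz
  have hux0 : ux x₀ t₀ = 0 := hlocmax.hasDerivAt_eq_zero hdx
  have huxx_np : uxx x₀ t₀ ≤ 0 := by
    by_contra hpos
    push_neg at hpos
    have hd2 := huxx t₀ ht₀' x₀ hx0i
    rw [hasDerivAt_iff_tendsto_slope] at hd2
    have hev : ∀ᶠ z in nhdsWithin x₀ {x₀}ᶜ, 0 < slope (fun z => ux z t₀) x₀ z :=
      hd2.eventually (eventually_gt_nhds hpos)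
    have hev2 : ∀ᶠ z in nhdsWithin x₀ (Ioi x₀), 0 < ux z t₀ ∧ z ∈ Ioo a b := by
      have h1 : ∀ᶠ z in nhdsWithin x₀ (Ioi x₀), 0 < slope (fun z => ux z t₀) x₀ z :=
        hev.filter_mono (nhdsWithin_mono x₀ (fun z hz => ne_of_gt hz))
      have h2 : ∀ᶠ z in nhdsWithin x₀ (Ioi x₀), z ∈ Ioo a b :=
        Filter.eventually_of_mem
          (mem_nhdsWithin_of_mem_nhds (isOpen_Ioo.mem_nhds hx0i)) (fun z hz => hz)
      have h3 : ∀ᶠ z in nhdsWithin x₀ (Ioi x₀), z ∈ Ioi x₀ :=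
        eventually_mem_nhdsWithin
      filter_upwards [h1, h2, h3] with z hz1 hz2 hz3
      refine ⟨?_, hz2⟩
      have hzx : 0 < z - x₀ := sub_pos.2 hz3
      have hslope : slope (fun z => ux z t₀) x₀ z = ux z t₀ / (z - x₀) := by
        rw [slope_def_field, hux0, sub_zero]
      rw [hslope] at hz1
      rcases div_pos_iff.mp hz1 with h | h
      · exact h.1
      · linarith [h.2]
    obtain ⟨d, hd, hdsub⟩ := mem_nhdsGT_iff_exists_Ioo_subset.mp hev2
    have hmin : x₀ < min d b := lt_min hd hx0i.2
    set e := (x₀ + min d b) / 2 with he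
    have he1 : x₀ < e := by
      simp only [he]; linarith
    have hed : e < min d b := by
      simp only [he]; linarith
    have heb : e < b := lt_of_lt_of_le hed (min_le_right _ _)
    have hedd : e < d := lt_of_lt_of_le hed (min_le_left _ _)
    have hmono : StrictMonoOn (fun z => u z t₀) (Icc x₀ e) := by
      refine strictMonoOn_of_deriv_pos (convex_Icc _ _) ?_ ?_
      · exact (hslice_x t₀ ht₀).mono (Icc_subset_Icc hx₀.1 heb.le)
      · intro z hz
        rw [interior_Icc] at hz
        have hzio : z ∈ Ioo a b := ⟨lt_trans hx0i.1 hz.1, lt_trans hz.2 heb⟩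
        have hder := (hux t₀ ht₀' z ⟨hzio.1.le, hzio.2.le⟩).hasDerivAt
          (Icc_mem_nhds hzio.1 hzio.2)
        rw [hder.deriv]
        exact (hdsub ⟨hz.1, lt_trans hz.2 hedd⟩).1
    have hlt := hmono (left_mem_Icc.2 he1.le) (right_mem_Icc.2 he1.le) he1
    have hle := umaxt e ⟨le_trans hx₀.1 he1.le, heb.le⟩
    simp only at hlt
    linarith
  -- the Caputo contradiction
  set y : ℝ → ℝ := fun s => u x₀ s - φ s with hy
  have hslice_t : ContinuousOn (u x₀) (Icc 0 T) :=
    hu_cont.comp ((continuous_const.prodMk continuous_id).continuousOn)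
      (fun s hs => mk_mem_prod hx₀ hs)
  have hyc : ContinuousOn y (Icc 0 t₀) :=
    (hslice_t.mono (Icc_subset_Icc le_rfl ht₀.2)).sub hφcont.continuousOn
  have hD : ∀ s ∈ Ioc (0:ℝ) t₀,
      HasDerivAt y (deriv (u x₀) s - F / Γα * (α * s ^ (α - 1))) s := by
    intro s hs
    have hsT : s ∈ Ioc 0 T := ⟨hs.1, le_trans hs.2 ht₀.2⟩
    have h1 : HasDerivAt (u x₀) (deriv (u x₀) s) s := (hu_t x₀ hx₀ s hsT).hasDerivAt
    have h2 : HasDerivAt (fun s : ℝ => s ^ α) (α * s ^ (α - 1)) s :=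
      Real.hasDerivAt_rpow_const (Or.inl hs.1.ne')
    exact h1.sub ((h2.const_mul (F / Γα)).const_add M0)
  have hDs : ∀ s ∈ Ioc (0:ℝ) t₀,
      deriv y s = deriv (u x₀) s - F / Γα * (α * s ^ (α - 1)) :=
    fun s hs => (hD s hs).deriv
  have hDcont : ContinuousOn
      (fun s => deriv (u x₀) s - F / Γα * (α * s ^ (α - 1))) (Ioc 0 t₀) := by
    refine ContinuousOn.sub ((hu_t' x₀ hx₀).mono (Ioc_subset_Ioc le_rfl ht₀.2)) ?_
    refine continuousOn_const.mul (continuousOn_const.mul ?_)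
    exact ContinuousOn.rpow_const continuousOn_id (fun x hx => Or.inl hx.1.ne')
  have hydcont : ContinuousOn (deriv y) (Ioc 0 t₀) := hDcont.congr hDs
  have huintt₀ : IntervalIntegrable (deriv (u x₀)) volume 0 t₀ :=
    (hu_int x₀ hx₀).mono_set
      (by rw [uIcc_of_le ht₀.1, uIcc_of_le hT.le]; exact Icc_subset_Icc le_rfl ht₀.2)
  have hDint : IntervalIntegrable
      (fun s => deriv (u x₀) s - F / Γα * (α * s ^ (α - 1))) volume 0 t₀ := by
    refine huintt₀.sub ?_
    exact ((intervalIntegrable_rpow' (by linarith)).const_mul α).const_mul _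
  have hyint : IntervalIntegrable (deriv y) volume 0 t₀ := by
    refine hDint.congr ?_
    intro s hs
    rw [uIoc_of_le ht₀.1] at hs
    exact (hDs s hs).symm
  have hymax : ∀ s ∈ Icc (0:ℝ) t₀, y s ≤ y t₀ := by
    intro s hs
    have := umax x₀ hx₀ s ⟨hs.1, le_trans hs.2 ht₀.2⟩
    simpa [hy] using this
  have hkey := caputo_max_lower hα0 hα1 ht₀pos hyc
    (fun s hs => by have h := hD s hs; rwa [← hDs s hs] at h)
    hydcont hyint hymax
  have hy0 : y 0 ≤ 0 := by
    have h1 := hinit' x₀ hx₀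
    have : y 0 = u x₀ 0 - M0 := by rw [hy]; simp [hφ0]
    linarith
  have hyt0 : 0 < y t₀ := hM
  have hLHS : 0 < t₀ ^ (-α) * (y t₀ - y 0) :=
    mul_pos (Real.rpow_pos_of_pos ht₀pos _) (by linarith)
  have hRHS : (∫ s in (0:ℝ)..t₀, (t₀ - s) ^ (-α) * deriv y s) ≤ 0 := by
    have hcongr : ∫ s in (0:ℝ)..t₀, (t₀ - s) ^ (-α) * deriv y s
        = ∫ s in (0:ℝ)..t₀, ((t₀ - s) ^ (-α) * deriv (u x₀) s
            - F / Γα * ((t₀ - s) ^ (-α) * (α * s ^ (α - 1)))) := by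
      refine intervalIntegral.integral_congr_ae (ae_of_all _ fun s hsI => ?_)
      rw [uIoc_of_le ht₀.1] at hsI
      rw [hDs s hsI]; ring
    have hint1 : IntervalIntegrable
        (fun s => (t₀ - s) ^ (-α) * deriv (u x₀) s) volume 0 t₀ :=
      kernelInt hα0 hα1 ht₀pos huintt₀
        ((hu_t' x₀ hx₀).mono (Ioc_subset_Ioc le_rfl ht₀.2))
    have hint2' : IntervalIntegrable (fun s : ℝ => α * s ^ (α - 1)) volume 0 t₀ :=
      (intervalIntegrable_rpow' (by linarith)).const_mul α
    have h2cont : ContinuousOn (fun s : ℝ => α * s ^ (α - 1)) (Ioc 0 t₀) :=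
      continuousOn_const.mul
        (ContinuousOn.rpow_const continuousOn_id (fun x hx => Or.inl hx.1.ne'))
    have hint2 : IntervalIntegrable
        (fun s => (t₀ - s) ^ (-α) * (α * s ^ (α - 1))) volume 0 t₀ :=
      kernelInt hα0 hα1 ht₀pos hint2' h2cont
    rw [hcongr, intervalIntegral.integral_sub hint1 (hint2.const_mul _),
      intervalIntegral.integral_const_mul, caputo_kernel_rpow hα0 hα1 ht₀pos]
    have hcap : ∫ s in (0:ℝ)..t₀, (t₀ - s) ^ (-α) * deriv (u x₀) s
        = Real.Gamma (1 - α) * caputo α (u x₀) t₀ := by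
      have hdef : caputo α (u x₀) t₀ = (1 / Real.Gamma (1 - α))
          * ∫ s in (0:ℝ)..t₀, (t₀ - s) ^ (-α) * deriv (u x₀) s := rfl
      rw [hdef]
      field_simp
    rw [hcap, hpde x₀ hx0i t₀ ht₀']
    have hfb : f x₀ t₀ ≤ F := hfF x₀ hx₀ t₀ ht₀
    have hcu : 0 ≤ c x₀ * u x₀ t₀ := mul_nonneg (hc x₀ hx₀) hupos.le
    have hE : F / Γα * (Real.Gamma (1 - α) * Γα) = Real.Gamma (1 - α) * F := by
      field_simp
    rw [hE]
    nlinarith [mul_nonneg hΓ1pos.le hcu,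
      mul_nonpos_of_nonneg_of_nonpos hΓ1pos.le huxx_np,
      mul_le_mul_of_nonneg_left hfb hΓ1pos.le]
  linarith


/-- A priori estimate for classical solutions of the time-fractional diffusion
problem with homogeneous Robin boundary conditions:
`‖u‖_∞ ≤ ‖u₀‖_∞ + (T^α/Γ(1+α)) ‖f‖_∞`. -/
theorem caputo_robin_apriori_estimate
    (a b T α σ0 σ1 β0 β1 : ℝ) (c u0 : ℝ → ℝ) (f u ux uxx : ℝ → ℝ → ℝ)
    (hab : a < b) (hT : 0 < T) (hα : α ∈ Ioo (0:ℝ) 1)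
    (hσ0 : 0 < σ0) (hσ1 : 0 < σ1) (hβ0 : β0 ≤ 0) (hβ1 : 0 ≤ β1)
    (hc : ∀ x ∈ Icc a b, 0 ≤ c x)
    (hf_cont : ContinuousOn (fun p : ℝ × ℝ => f p.1 p.2) (Icc a b ×ˢ Icc 0 T))
    -- u is a classical solution
    (hu_cont : ContinuousOn (fun p : ℝ × ℝ => u p.1 p.2) (Icc a b ×ˢ Icc 0 T))
    (hu_t : ∀ x ∈ Icc a b, ∀ t ∈ Ioc 0 T, DifferentiableAt ℝ (u x) t)
    (hu_t' : ∀ x ∈ Icc a b, ContinuousOn (deriv (u x)) (Ioc 0 T))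
    (hu_int : ∀ x ∈ Icc a b, IntervalIntegrable (deriv (u x)) volume 0 T)
    (hux : ∀ t ∈ Ioc 0 T, ∀ x ∈ Icc a b,
      HasDerivWithinAt (fun z => u z t) (ux x t) (Icc a b) x)
    (huxx : ∀ t ∈ Ioc 0 T, ∀ x ∈ Ioo a b,
      HasDerivAt (fun z => ux z t) (uxx x t) x)
    (huxx_cont : ∀ t ∈ Ioc 0 T, ContinuousOn (fun z => uxx z t) (Ioo a b))
    (hpde : ∀ x ∈ Ioo a b, ∀ t ∈ Ioc 0 T,
      caputo α (u x) t = uxx x t - c x * u x t + f x t)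
    -- initial condition and homogeneous Robin boundary conditions
    (hinit : ∀ x ∈ Icc a b, u x 0 = u0 x)
    (hbc_a : ∀ t ∈ Ioc 0 T, σ0 * u a t + β0 * ux a t = 0)
    (hbc_b : ∀ t ∈ Ioc 0 T, σ1 * u b t + β1 * ux b t = 0) :
    ∀ x ∈ Icc a b, ∀ t ∈ Icc 0 T,
      |u x t| ≤ sSup ((fun z => |u0 z|) '' Icc a b)
        + T ^ α / Real.Gamma (1 + α)
          * sSup ((fun p : ℝ × ℝ => |f p.1 p.2|) '' (Icc a b ×ˢ Icc 0 T)) := by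
  intro x hx t ht
  set M0 := sSup ((fun z => |u0 z|) '' Icc a b) with hM0def
  set FF := sSup ((fun p : ℝ × ℝ => |f p.1 p.2|) '' (Icc a b ×ˢ Icc 0 T)) with hFFdef
  have hu0cont : ContinuousOn (fun z => |u0 z|) (Icc a b) := by
    have h1 : ContinuousOn (fun z => u z 0) (Icc a b) :=
      hu_cont.comp ((continuous_id.prodMk continuous_const).continuousOn)
        (fun z hz => Set.mk_mem_prod hz (left_mem_Icc.2 hT.le))
    exact (h1.congr (fun z hz => (hinit z hz).symm)).abs
  have hbdd0 : BddAbove ((fun z => |u0 z|) '' Icc a b) :=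
    (isCompact_Icc.image_of_continuousOn hu0cont).bddAbove
  have hM0le : ∀ z ∈ Icc a b, |u0 z| ≤ M0 := fun z hz => le_csSup hbdd0 ⟨z, hz, rfl⟩
  have hM0 : 0 ≤ M0 :=
    le_trans (abs_nonneg _) (hM0le a (left_mem_Icc.2 hab.le))
  have hfabs : ContinuousOn (fun p : ℝ × ℝ => |f p.1 p.2|) (Icc a b ×ˢ Icc 0 T) :=
    hf_cont.abs
  have hbddF : BddAbove ((fun p : ℝ × ℝ => |f p.1 p.2|) '' (Icc a b ×ˢ Icc 0 T)) :=
    ((isCompact_Icc.prod isCompact_Icc).image_of_continuousOn hfabs).bddAbove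
  have hFle : ∀ z ∈ Icc a b, ∀ s ∈ Icc (0:ℝ) T, |f z s| ≤ FF :=
    fun z hz s hs => le_csSup hbddF ⟨(z, s), Set.mk_mem_prod hz hs, rfl⟩
  have hF : 0 ≤ FF := le_trans (abs_nonneg _)
    (hFle a (left_mem_Icc.2 hab.le) 0 (left_mem_Icc.2 hT.le))
  have hup := one_sided a b T α σ0 σ1 β0 β1 c f u ux uxx hab hT hα hσ0 hσ1 hβ0 hβ1 hc
    hu_cont hu_t hu_t' hu_int hux huxx hpde hbc_a hbc_b M0 FF hM0 hF
    (fun z hz => by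
      rw [hinit z hz]
      exact le_trans (le_abs_self _) (hM0le z hz))
    (fun z hz s hs => le_trans (le_abs_self _) (hFle z hz s hs))
  have hnegderiv : ∀ z : ℝ, (deriv fun s => -(u z s)) = fun s => -(deriv (u z) s) :=
    fun z => funext fun s => deriv.neg
  have hdn := one_sided a b T α σ0 σ1 β0 β1 c (fun z s => -(f z s)) (fun z s => -(u z s))
    (fun z s => -(ux z s)) (fun z s => -(uxx z s)) hab hT hα hσ0 hσ1 hβ0 hβ1 hc
    hu_cont.neg
    (fun z hz s hs => (hu_t z hz s hs).neg)
    (fun z hz => by rw [hnegderiv z]; exact (hu_t' z hz).neg)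
    (fun z hz => by rw [hnegderiv z]; exact (hu_int z hz).neg)
    (fun s hs z hz => (hux s hs z hz).neg)
    (fun s hs z hz => (huxx s hs z hz).neg)
    (fun z hz s hs => by rw [caputo_neg α (u z) s, hpde z hz s hs]; ring)
    (fun s hs => by have := hbc_a s hs; show σ0 * -(u a s) + β0 * -(ux a s) = 0; linarith)
    (fun s hs => by have := hbc_b s hs; show σ1 * -(u b s) + β1 * -(ux b s) = 0; linarith)
    M0 FF hM0 hF
    (fun z hz => by
      have h := hinit z hz
      rw [h]
      exact le_trans (neg_le_abs _) (hM0le z hz))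
    (fun z hz s hs => le_trans (neg_le_abs _) (hFle z hz s hs))
  have h1 := hup x hx t ht
  have h2 := hdn x hx t ht
  exact abs_le.2 ⟨by linarith, h1⟩
end

section
/- Suppose u and ū are classical solutions of the time-fractional diffusion problem with Robin boundary conditions corresponding to data (f, u₀) and (f̄, ū₀) respectively. If ‖f − f̄‖_∞ ≤ ε on [a,b]×[0,T] and ‖u₀ − ū₀‖_∞ ≤ ε₀ on [a,b], then ‖u − ū‖_∞ ≤ ε₀ + (T^α/Γ(1+α)) ε on [a,b]×[0,T]. In particular, the problem has at most one classical solution. -/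
open Set MeasureTheory

/-- `u` is a classical solution of the time-fractional diffusion problem on
`[a,b]×[0,T]` with reaction coefficient `c`, Caputo order `α`, source `f`,
initial datum `u0` and homogeneous Robin boundary conditions with
coefficients `σ0, σ1, β0, β1`; `ux, uxx` are its first and second spatial
derivatives. -/
structure IsClassicalSolution (a b T α σ0 σ1 β0 β1 : ℝ) (c u0 : ℝ → ℝ)
    (f u ux uxx : ℝ → ℝ → ℝ) : Prop where
  cont : ContinuousOn (fun p : ℝ × ℝ => u p.1 p.2) (Icc a b ×ˢ Icc 0 T)
  diff_t : ∀ x ∈ Icc a b, ∀ t ∈ Ioc 0 T, DifferentiableAt ℝ (u x) t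
  cont_t' : ∀ x ∈ Icc a b, ContinuousOn (deriv (u x)) (Ioc 0 T)
  int_t' : ∀ x ∈ Icc a b, IntervalIntegrable (deriv (u x)) volume 0 T
  deriv_x : ∀ t ∈ Ioc 0 T, ∀ x ∈ Icc a b,
    HasDerivWithinAt (fun z => u z t) (ux x t) (Icc a b) x
  deriv_xx : ∀ t ∈ Ioc 0 T, ∀ x ∈ Ioo a b,
    HasDerivAt (fun z => ux z t) (uxx x t) x
  cont_xx : ∀ t ∈ Ioc 0 T, ContinuousOn (fun z => uxx z t) (Ioo a b)
  pde : ∀ x ∈ Ioo a b, ∀ t ∈ Ioc 0 T,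
    caputo α (u x) t = uxx x t - c x * u x t + f x t
  init : ∀ x ∈ Icc a b, u x 0 = u0 x
  bc_a : ∀ t ∈ Ioc 0 T, σ0 * u a t + β0 * ux a t = 0
  bc_b : ∀ t ∈ Ioc 0 T, σ1 * u b t + β1 * ux b t = 0

open Filter Topology in

lemma real_beta {α : ℝ} (hα : α ∈ Ioo (0:ℝ) 1) :
    ∫ u in (0:ℝ)..1, u ^ (α-1) * (1-u) ^ (-α) = Real.Gamma α * Real.Gamma (1-α) := by
  have h1 : (0:ℝ) < α := hα.1
  have h2 : (0:ℝ) < 1 - α := by linarith [hα.2]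
  have hbeta := Complex.Gamma_mul_Gamma_eq_betaIntegral
    (s := (α:ℂ)) (t := ((1-α:ℝ):ℂ)) (by simpa using h1) (by simpa using h2)
  have hsum : (α:ℂ) + ((1-α:ℝ):ℂ) = 1 := by push_cast; ring
  rw [hsum, Complex.Gamma_one, one_mul] at hbeta
  have hinteg : Complex.betaIntegral (α:ℂ) ((1-α:ℝ):ℂ)
      = ((∫ u in (0:ℝ)..1, u ^ (α-1) * (1-u) ^ (-α) : ℝ) : ℂ) := by
    rw [Complex.betaIntegral, ← intervalIntegral.integral_ofReal]
    apply intervalIntegral.integral_congr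
    intro x hx
    rw [uIcc_of_le (by norm_num : (0:ℝ) ≤ 1)] at hx
    have hx0 : (0:ℝ) ≤ x := hx.1
    have hx1 : (0:ℝ) ≤ 1 - x := by linarith [hx.2]
    show (x:ℂ) ^ ((α:ℂ) - 1) * ((1:ℂ) - (x:ℂ)) ^ (((1-α:ℝ):ℂ) - 1)
        = ((x ^ (α - 1) * (1 - x) ^ (-α) : ℝ) : ℂ)
    rw [Complex.ofReal_mul, Complex.ofReal_cpow hx0, Complex.ofReal_cpow hx1]
    push_cast
    ring_nf
  rw [hinteg, Complex.Gamma_ofReal, Complex.Gamma_ofReal] at hbeta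
  exact_mod_cast hbeta.symm

open Filter Topology in

lemma beta_conv {α t : ℝ} (hα : α ∈ Ioo (0:ℝ) 1) (ht : 0 < t)
    (hbeta : ∫ u in (0:ℝ)..1, u ^ (α-1) * (1-u) ^ (-α) = Real.Gamma α * Real.Gamma (1-α)) :
    ∫ s in (0:ℝ)..t, (t-s) ^ (-α) * s ^ (α-1) = Real.Gamma α * Real.Gamma (1-α) := by
  have key := intervalIntegral.smul_integral_comp_mul_left
    (f := fun s => (t-s) ^ (-α) * s ^ (α-1)) (a := (0:ℝ)) (b := 1) t
  rw [mul_zero, mul_one] at key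
  rw [← key]
  have hcong : ∫ u in (0:ℝ)..1, (t - t * u) ^ (-α) * (t * u) ^ (α-1)
      = ∫ u in (0:ℝ)..1, t⁻¹ * (u ^ (α-1) * (1-u) ^ (-α)) := by
    apply intervalIntegral.integral_congr
    intro u hu
    rw [uIcc_of_le (by norm_num : (0:ℝ) ≤ 1)] at hu
    have h1 : t - t * u = t * (1 - u) := by ring
    show (t - t*u) ^ (-α) * (t*u) ^ (α-1) = t⁻¹ * (u ^ (α-1) * (1-u) ^ (-α))
    rw [h1, Real.mul_rpow ht.le (by linarith [hu.2]), Real.mul_rpow ht.le hu.1]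
    have : t ^ (-α) * t ^ (α - 1) = t⁻¹ := by
      rw [← Real.rpow_add ht]
      rw [show -α + (α-1) = -1 by ring, Real.rpow_neg_one]
    calc t ^ (-α) * (1 - u) ^ (-α) * (t ^ (α-1) * u ^ (α-1))
        = (t ^ (-α) * t ^ (α-1)) * ((1-u) ^ (-α) * u ^ (α-1)) := by ring
      _ = t⁻¹ * (u ^ (α-1) * (1-u) ^ (-α)) := by rw [this]; ring
  rw [hcong, intervalIntegral.integral_const_mul, hbeta, smul_eq_mul]
  field_simp

open Filter Topology in

lemma integrable_kernel {α t T : ℝ} (hα : α ∈ Ioo (0:ℝ) 1) (ht : 0 < t) (htT : t ≤ T)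
    {y' : ℝ → ℝ} (hc : ContinuousOn y' (Ioc 0 T))
    (hi : IntervalIntegrable y' volume 0 T) :
    IntervalIntegrable (fun s => (t - s) ^ (-α) * y' s) volume 0 t := by
  have ht2 : 0 < t / 2 := by linarith
  apply IntervalIntegrable.trans (b := t / 2)
  · -- on [0, t/2] : kernel is continuous, y' integrable
    have hy' : IntervalIntegrable y' volume 0 (t/2) :=
      hi.mono_set (by rw [uIcc_of_le (by linarith : (0:ℝ) ≤ t/2), uIcc_of_le (by linarith : (0:ℝ) ≤ T)]; exact Icc_subset_Icc le_rfl (by linarith))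
    apply hy'.continuousOn_mul
    intro s hs'
    exact ((continuousOn_const.sub continuousOn_id).rpow_const
      (fun z hz => Or.inl (by
        rw [uIcc_of_le (by linarith : (0:ℝ) ≤ t/2)] at hz
        have := hz.2; intro h; simp only [Pi.sub_apply, id] at h; nlinarith [hz.1]))) s hs'
  · -- on [t/2, t] : kernel integrable, y' continuous
    have hker : IntervalIntegrable (fun s => (t - s) ^ (-α)) volume (t/2) t := by
      have h0 : IntervalIntegrable (fun x : ℝ => x ^ (-α)) volume 0 (t/2) :=
        intervalIntegral.intervalIntegrable_rpow' (by linarith [hα.2])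
      have := h0.comp_sub_left t
      simpa [sub_zero, show t - t/2 = t/2 from by ring] using this.symm
    apply hker.mul_continuousOn
    apply hc.mono
    rw [uIcc_of_le (by linarith : t/2 ≤ t)]
    exact fun s hs => ⟨by linarith [hs.1], by linarith [hs.2]⟩

open Filter Topology in section

lemma hasDerivAt_ker {t s α : ℝ} (h : t - s ≠ 0) :
    HasDerivAt (fun z => (t - z) ^ (-α)) (α * (t - s) ^ (-α - 1)) s := by
  have h1 : HasDerivAt (fun z : ℝ => t - z) (-1) s := (hasDerivAt_id s).const_sub t
  have h2 : HasDerivAt (fun z => (t - z) ^ (-α)) (-α * (t - s) ^ (-α - 1) * -1) s :=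
    (Real.hasDerivAt_rpow_const (x := t - s) (p := -α) (Or.inl h)).comp s h1
  convert h2 using 1
  ring

lemma luchko {α t : ℝ} (hα : α ∈ Ioo (0:ℝ) 1) (ht : 0 < t)
    {y y' : ℝ → ℝ}
    (hy : ContinuousOn y (Icc 0 t))
    (hd : ∀ s ∈ Ioc 0 t, HasDerivAt y (y' s) s)
    (hc : ContinuousOn y' (Ioc 0 t))
    (hker : IntervalIntegrable (fun s => (t - s) ^ (-α) * y' s) volume 0 t)
    (hmax : ∀ s ∈ Icc 0 t, y s ≤ y t) :
    t ^ (-α) * (y t - y 0) ≤ ∫ s in (0:ℝ)..t, (t - s) ^ (-α) * y' s := by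
  have hα0 := hα.1
  have hα1 := hα.2
  -- Step B : for every δ ∈ (0, t/2]:
  have stepB : ∀ δ ∈ Ioc 0 (t/2),
      δ ^ (-α) * (y (t-δ) - y t) + t ^ (-α) * (y t - y 0)
        ≤ ∫ s in (0:ℝ)..(t-δ), (t - s) ^ (-α) * y' s := by
    intro δ hδ
    obtain ⟨hδ0, hδt⟩ := hδ
    have htδ : t - δ < t := by linarith
    have htδ0 : 0 < t - δ := by linarith
    -- Step A : for every η ∈ (0, t-δ]:
    have stepA : ∀ η ∈ Ioc 0 (t-δ),
        δ ^ (-α) * (y (t-δ) - y t) + (t-η) ^ (-α) * (y t - y η)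
          ≤ ∫ s in η..(t-δ), (t - s) ^ (-α) * y' s := by
      intro η hη
      obtain ⟨hη0, hηδ⟩ := hη
      have hsub : uIcc η (t-δ) ⊆ Ioc 0 t := by
        rw [uIcc_of_le hηδ]
        exact fun s hs => ⟨lt_of_lt_of_le hη0 hs.1, by linarith [hs.2]⟩
      have hne : ∀ s ∈ uIcc η (t-δ), t - s ≠ 0 := by
        intro s hs
        rw [uIcc_of_le hηδ] at hs
        have : s ≤ t - δ := hs.2
        intro hcon; linarith
      have hU : ∀ s ∈ uIcc η (t-δ), HasDerivAt (fun z => (t - z) ^ (-α))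
          (α * (t - s) ^ (-α - 1)) s := fun s hs => hasDerivAt_ker (hne s hs)
      have hV : ∀ s ∈ uIcc η (t-δ), HasDerivAt y (y' s) s := fun s hs => hd s (hsub hs)
      have hcontU' : ContinuousOn (fun s => α * (t - s) ^ (-α - 1)) (uIcc η (t-δ)) := by
        apply ContinuousOn.mul continuousOn_const
        exact (continuousOn_const.sub continuousOn_id).rpow_const
          (fun s hs => Or.inl (by simpa using hne s hs))
      have hintU' : IntervalIntegrable (fun s => α * (t - s) ^ (-α - 1)) volume η (t-δ) :=
        hcontU'.intervalIntegrable
      have hintV' : IntervalIntegrable y' volume η (t-δ) :=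
        (hc.mono hsub).intervalIntegrable
      have hibp := intervalIntegral.integral_mul_deriv_eq_deriv_mul hU hV hintU' hintV'
      -- the boundary term
      have e1 : t - (t - δ) = δ := by ring
      rw [e1] at hibp
      -- bound the remaining integral
      have hcontY : ContinuousOn y (uIcc η (t-δ)) :=
        hy.mono (fun s hs => Ioc_subset_Icc_self (hsub hs))
      have hmono : ∫ s in η..(t-δ), α * (t - s) ^ (-α - 1) * y s
          ≤ ∫ s in η..(t-δ), α * (t - s) ^ (-α - 1) * y t := by
        apply intervalIntegral.integral_mono_on hηδ
          (hcontU'.mul hcontY).intervalIntegrable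
          (hcontU'.mul continuousOn_const).intervalIntegrable
        intro s hs
        have hs' : s ∈ uIcc η (t-δ) := by rw [uIcc_of_le hηδ]; exact hs
        have h1 : 0 ≤ α * (t - s) ^ (-α - 1) := by
          apply mul_nonneg hα0.le
          apply Real.rpow_nonneg
          have := (hsub hs').2; linarith [lt_of_lt_of_le (hsub hs').1 (le_refl s)]
        exact mul_le_mul_of_nonneg_left (hmax s (Ioc_subset_Icc_self (hsub hs'))) h1
      have hftc : ∫ s in η..(t-δ), α * (t - s) ^ (-α - 1)
          = δ ^ (-α) - (t - η) ^ (-α) := by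
        have := intervalIntegral.integral_eq_sub_of_hasDerivAt hU hintU'
        rw [this, e1]
      have hval : ∫ s in η..(t-δ), α * (t - s) ^ (-α - 1) * y t
          = (δ ^ (-α) - (t - η) ^ (-α)) * y t := by
        rw [intervalIntegral.integral_mul_const, hftc]
      rw [hibp]
      rw [hval] at hmono
      nlinarith [hmono]
    -- now take η → 0 along L := 𝓝[Ioc 0 (t-δ)] 0
    set L := nhdsWithin (0:ℝ) (Ioc 0 (t-δ)) with hL
    haveI hLne : L.NeBot := by
      apply mem_closure_iff_nhdsWithin_neBot.mp
      rw [closure_Ioc (ne_of_lt htδ0)]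
      exact ⟨le_rfl, htδ0.le⟩
    have hIccInt : IntegrableOn (fun s => (t - s) ^ (-α) * y' s) (Icc 0 t) volume := by
      rw [← intervalIntegrable_iff_integrableOn_Icc_of_le ht.le]; exact hker
    have hIccIntδ : IntegrableOn (fun s => (t - s) ^ (-α) * y' s) (uIcc 0 (t-δ)) volume := by
      rw [uIcc_of_le htδ0.le]
      exact hIccInt.mono_set (Icc_subset_Icc le_rfl htδ.le)
    have hPcont : ContinuousOn (fun x => ∫ s in (0:ℝ)..x, (t - s) ^ (-α) * y' s)
        (uIcc 0 (t-δ)) := intervalIntegral.continuousOn_primitive_interval hIccIntδ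
    have hPtend : Tendsto (fun η => ∫ s in (0:ℝ)..η, (t - s) ^ (-α) * y' s) L (𝓝 0) := by
      have h0 := (hPcont 0 left_mem_uIcc).tendsto
      rw [intervalIntegral.integral_same] at h0
      exact h0.mono_left (nhdsWithin_mono 0 (by rw [uIcc_of_le htδ0.le]; exact Ioc_subset_Icc_self))
    have hRHStend : Tendsto (fun η => (∫ s in (0:ℝ)..(t-δ), (t - s) ^ (-α) * y' s)
        - ∫ s in (0:ℝ)..η, (t - s) ^ (-α) * y' s) L
        (𝓝 (∫ s in (0:ℝ)..(t-δ), (t - s) ^ (-α) * y' s)) := by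
      simpa using (tendsto_const_nhds.sub hPtend)
    have hytend : Tendsto (fun η => y η) L (𝓝 (y 0)) := by
      have := (hy 0 ⟨le_rfl, ht.le⟩).tendsto
      exact this.mono_left (nhdsWithin_mono 0
        (fun s hs => ⟨hs.1.le, le_trans hs.2 (by linarith)⟩))
    have hktend : Tendsto (fun η => (t - η) ^ (-α)) L (𝓝 (t ^ (-α))) := by
      have hcontA : ContinuousAt (fun η : ℝ => (t - η) ^ (-α)) 0 := by
        apply ContinuousAt.comp (g := fun z : ℝ => z ^ (-α))
        · simpa using Real.continuousAt_rpow_const t (-α) (Or.inl (ne_of_gt ht))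
        · exact continuousAt_const.sub continuousAt_id
      have := hcontA.tendsto.mono_left (nhdsWithin_le_nhds (s := Ioc 0 (t-δ)))
      simpa using this
    have hLHStend : Tendsto (fun η => δ ^ (-α) * (y (t-δ) - y t)
        + (t - η) ^ (-α) * (y t - y η)) L
        (𝓝 (δ ^ (-α) * (y (t-δ) - y t) + t ^ (-α) * (y t - y 0))) :=
      tendsto_const_nhds.add (hktend.mul (tendsto_const_nhds.sub hytend))
    have hineq : ∀ᶠ η in L, δ ^ (-α) * (y (t-δ) - y t) + (t - η) ^ (-α) * (y t - y η)
        ≤ (∫ s in (0:ℝ)..(t-δ), (t - s) ^ (-α) * y' s)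
          - ∫ s in (0:ℝ)..η, (t - s) ^ (-α) * y' s := by
      filter_upwards [eventually_mem_nhdsWithin] with η hη
      have hsplit : (∫ s in (0:ℝ)..(t-δ), (t - s) ^ (-α) * y' s)
          - ∫ s in (0:ℝ)..η, (t - s) ^ (-α) * y' s
          = ∫ s in η..(t-δ), (t - s) ^ (-α) * y' s := by
        apply intervalIntegral.integral_interval_sub_left
        · apply hker.mono_set
          rw [uIcc_of_le htδ0.le, uIcc_of_le ht.le]
          exact Icc_subset_Icc le_rfl htδ.le
        · apply hker.mono_set
          rw [uIcc_of_le hη.1.le, uIcc_of_le ht.le]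
          exact Icc_subset_Icc le_rfl (by linarith [hη.2])
      rw [hsplit]
      exact stepA η hη
    exact le_of_tendsto_of_tendsto hLHStend hRHStend hineq
  -- Step C : take δ → 0 along M := 𝓝[Ioc 0 (t/2)] 0
  set M := nhdsWithin (0:ℝ) (Ioc 0 (t/2)) with hM
  have ht2 : (0:ℝ) < t/2 := by linarith
  haveI hMne : M.NeBot := by
    apply mem_closure_iff_nhdsWithin_neBot.mp
    rw [closure_Ioc (ne_of_lt ht2)]
    exact ⟨le_rfl, ht2.le⟩
  have hIccInt : IntegrableOn (fun s => (t - s) ^ (-α) * y' s) (Icc 0 t) volume := by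
    rw [← intervalIntegrable_iff_integrableOn_Icc_of_le ht.le]; exact hker
  have hQcont : ContinuousOn (fun x => ∫ s in (0:ℝ)..x, (t - s) ^ (-α) * y' s)
      (uIcc 0 t) := intervalIntegral.continuousOn_primitive_interval
      (by rw [uIcc_of_le ht.le]; exact hIccInt)
  have hmapM : Tendsto (fun δ : ℝ => t - δ) M (𝓝[uIcc 0 t] t) := by
    apply tendsto_nhdsWithin_of_tendsto_nhds_of_eventually_within
    · have : Tendsto (fun δ : ℝ => t - δ) (𝓝 0) (𝓝 (t - 0)) :=
        tendsto_const_nhds.sub tendsto_id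
      rw [sub_zero] at this
      exact this.mono_left nhdsWithin_le_nhds
    · filter_upwards [eventually_mem_nhdsWithin] with δ hδ
      rw [uIcc_of_le ht.le]
      exact ⟨by linarith [hδ.1, hδ.2], by linarith [hδ.1, hδ.2]⟩
  have hRHStend : Tendsto (fun δ => ∫ s in (0:ℝ)..(t-δ), (t - s) ^ (-α) * y' s) M
      (𝓝 (∫ s in (0:ℝ)..t, (t - s) ^ (-α) * y' s)) := by
    have := (hQcont t (by rw [uIcc_of_le ht.le]; exact ⟨ht.le, le_rfl⟩)).tendsto
    exact this.comp hmapM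
  -- the first term tends to zero
  have hslope : Tendsto (fun δ => slope y t (t - δ)) M (𝓝 (y' t)) := by
    have h1 := hasDerivAt_iff_tendsto_slope.mp (hd t ⟨ht, le_rfl⟩)
    apply h1.comp
    apply tendsto_nhdsWithin_of_tendsto_nhds_of_eventually_within
    · have : Tendsto (fun δ : ℝ => t - δ) (𝓝 0) (𝓝 (t - 0)) :=
        tendsto_const_nhds.sub tendsto_id
      rw [sub_zero] at this
      exact this.mono_left nhdsWithin_le_nhds
    · filter_upwards [eventually_mem_nhdsWithin] with δ hδ
      simp only [mem_compl_iff, mem_singleton_iff]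
      intro hcon
      have : δ = 0 := by linarith [sub_eq_self.mp hcon]
      exact absurd this (ne_of_gt hδ.1)
  have hpow : Tendsto (fun δ : ℝ => δ ^ (1 - α)) M (𝓝 0) := by
    have h0 : ContinuousAt (fun x : ℝ => x ^ (1 - α)) 0 :=
      Real.continuousAt_rpow_const 0 (1-α) (Or.inr (by linarith))
    have := h0.tendsto.mono_left (nhdsWithin_le_nhds (s := Ioc 0 (t/2)))
    rwa [Real.zero_rpow (by linarith : (1:ℝ) - α ≠ 0)] at this
  have hterm1 : Tendsto (fun δ => δ ^ (-α) * (y (t-δ) - y t)) M (𝓝 0) := by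
    have heq : ∀ᶠ δ in M, -(δ ^ (1 - α)) * slope y t (t - δ)
        = δ ^ (-α) * (y (t-δ) - y t) := by
      filter_upwards [eventually_mem_nhdsWithin] with δ hδ
      have hδ0 : (0:ℝ) < δ := hδ.1
      have hsplit : δ ^ (1 - α) = δ * δ ^ (-α) := by
        nth_rewrite 2 [← Real.rpow_one δ]
        rw [← Real.rpow_add hδ0]
        rw [show (1:ℝ) + -α = 1 - α from by ring]
      rw [slope_def_field, hsplit]
      rw [show t - δ - t = -δ from by ring]
      field_simp
    have := (hpow.neg.mul hslope)
    rw [neg_zero, zero_mul] at this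
    exact this.congr' heq
  have hLHStend : Tendsto (fun δ => δ ^ (-α) * (y (t-δ) - y t)
      + t ^ (-α) * (y t - y 0)) M (𝓝 (t ^ (-α) * (y t - y 0))) := by
    have := hterm1.add (tendsto_const_nhds (x := t ^ (-α) * (y t - y 0)) (f := M))
    rwa [zero_add] at this
  have hineq : ∀ᶠ δ in M, δ ^ (-α) * (y (t-δ) - y t) + t ^ (-α) * (y t - y 0)
      ≤ ∫ s in (0:ℝ)..(t-δ), (t - s) ^ (-α) * y' s := by
    filter_upwards [eventually_mem_nhdsWithin] with δ hδ
    exact stepB δ hδ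
  exact le_of_tendsto_of_tendsto hLHStend hRHStend hineq

end
open Filter Topology in
lemma key_onesided (a b T α σ0 σ1 β0 β1 ε ε0 : ℝ) (c u0 ub0 : ℝ → ℝ)
    (f u ux uxx fb ub ubx ubxx : ℝ → ℝ → ℝ)
    (hab : a < b) (hT : 0 < T) (hα : α ∈ Ioo (0:ℝ) 1)
    (hσ0 : 0 < σ0) (hσ1 : 0 < σ1) (hβ0 : β0 ≤ 0) (hβ1 : 0 ≤ β1)
    (hc : ∀ x ∈ Icc a b, 0 ≤ c x)
    (hu : IsClassicalSolution a b T α σ0 σ1 β0 β1 c u0 f u ux uxx)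
    (hub : IsClassicalSolution a b T α σ0 σ1 β0 β1 c ub0 fb ub ubx ubxx)
    (hε : ∀ x ∈ Icc a b, ∀ t ∈ Icc 0 T, f x t - fb x t ≤ ε)
    (hε0 : ∀ x ∈ Icc a b, u0 x - ub0 x ≤ ε0)
    (hεpos : 0 ≤ ε) (hε0pos : 0 ≤ ε0) :
    ∀ x ∈ Icc a b, ∀ t ∈ Icc 0 T,
      u x t - ub x t ≤ ε0 + T ^ α / Real.Gamma (1 + α) * ε := by
  have hα0 := hα.1
  have hα1 := hα.2
  have hΓ : 0 < Real.Gamma (1 + α) := Real.Gamma_pos_of_pos (by linarith)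
  have hΓ1 : 0 < Real.Gamma (1 - α) := Real.Gamma_pos_of_pos (by linarith)
  set k : ℝ := ε / Real.Gamma (1 + α) with hk
  have hk0 : 0 ≤ k := div_nonneg hεpos hΓ.le
  set g : ℝ → ℝ := fun t => ε0 + k * t ^ α with hg
  have hgcont : Continuous g := by
    apply continuous_const.add
    apply continuous_const.mul
    rw [continuous_iff_continuousAt]
    exact fun x => Real.continuousAt_rpow_const x α (Or.inr hα0.le)
  have hg0 : g 0 = ε0 := by
    simp [hg, Real.zero_rpow (ne_of_gt hα0)]
  have hgnonneg : ∀ t, 0 ≤ t → 0 ≤ g t := by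
    intro t ht
    have : 0 ≤ k * t ^ α := mul_nonneg hk0 (Real.rpow_nonneg ht α)
    simp only [hg]; linarith
  set V : ℝ × ℝ → ℝ := fun p => u p.1 p.2 - ub p.1 p.2 - g p.2 with hV
  set K : Set (ℝ × ℝ) := Icc a b ×ˢ Icc 0 T with hK
  have hKc : IsCompact K := isCompact_Icc.prod isCompact_Icc
  have hKne : K.Nonempty := ⟨(a, 0), ⟨⟨le_rfl, hab.le⟩, ⟨le_rfl, hT.le⟩⟩⟩
  have hVcont : ContinuousOn V K :=
    (hu.cont.sub hub.cont).sub ((hgcont.comp continuous_snd).continuousOn)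
  obtain ⟨p, hpK, hmax'⟩ := hKc.exists_isMaxOn hKne hVcont
  obtain ⟨x', t'⟩ := p
  have hmax : ∀ q ∈ K, V q ≤ V (x', t') := hmax'
  have hx'ab : x' ∈ Icc a b := hpK.1
  have ht'T : t' ∈ Icc 0 T := hpK.2
  -- main claim: V (x', t') ≤ 0
  have hVle : V (x', t') ≤ 0 := by
    by_contra hcon
    push_neg at hcon
    -- t' ≠ 0
    have ht'0 : t' ≠ 0 := by
      intro h0
      have : V (x', t') = u0 x' - ub0 x' - ε0 := by
        simp only [hV, h0, hg0, hu.init x' hx'ab, hub.init x' hx'ab]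
      rw [this] at hcon
      have := hε0 x' hx'ab
      linarith
    have ht' : t' ∈ Ioc 0 T := ⟨lt_of_le_of_ne ht'T.1 (Ne.symm ht'0), ht'T.2⟩
    -- w := u - ub at the max point is positive
    have hwpos : 0 < u x' t' - ub x' t' := by
      have := hgnonneg t' ht'T.1
      simp only [hV] at hcon
      linarith
    -- case analysis on x'
    rcases eq_or_lt_of_le hx'ab.1 with hxa | hxa
    · -- x' = a
      rw [← hxa] at hwpos hmax
      have haab : a ∈ Icc a b := ⟨le_rfl, hab.le⟩
      have hda : HasDerivWithinAt (fun z => u z t' - ub z t') (ux a t' - ubx a t')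
          (Icc a b) a := (hu.deriv_x t' ht' a haab).sub (hub.deriv_x t' ht' a haab)
      have hslope : ux a t' - ubx a t' ≤ 0 := by
        haveI hne : (𝓝[Icc a b \ {a}] a).NeBot := by
          apply Filter.NeBot.mono _ (nhdsWithin_mono a (show Ioc a b ⊆ Icc a b \ {a} by
            intro z hz; exact ⟨⟨hz.1.le, hz.2⟩, ne_of_gt hz.1⟩))
          apply mem_closure_iff_nhdsWithin_neBot.mp
          rw [closure_Ioc (ne_of_lt hab)]
          exact ⟨le_rfl, hab.le⟩
        have htend := hasDerivWithinAt_iff_tendsto_slope.mp hda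
        apply le_of_tendsto htend
        filter_upwards [eventually_mem_nhdsWithin] with z hz
        obtain ⟨hzI, hzne⟩ := hz
        have hza : a < z := lt_of_le_of_ne hzI.1 (Ne.symm hzne)
        have hle : u z t' - ub z t' ≤ u a t' - ub a t' := by
          have h5 := hmax (z, t') ⟨⟨hzI.1, hzI.2⟩, ht'T⟩
          simp only [hV] at h5 ⊢
          linarith
        rw [slope_def_field]
        apply div_nonpos_of_nonpos_of_nonneg
        · linarith
        · linarith
      have hbca := hu.bc_a t' ht'
      have hbcb := hub.bc_a t' ht'
      nlinarith [mul_nonneg (neg_nonneg.mpr hβ0) (neg_nonneg.mpr hslope),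
        mul_pos hσ0 hwpos]
    rcases eq_or_lt_of_le hx'ab.2 with hxb | hxb
    · -- x' = b
      rw [hxb] at hwpos hmax
      have hbab : b ∈ Icc a b := ⟨hab.le, le_rfl⟩
      have hda : HasDerivWithinAt (fun z => u z t' - ub z t') (ux b t' - ubx b t')
          (Icc a b) b := (hu.deriv_x t' ht' b hbab).sub (hub.deriv_x t' ht' b hbab)
      have hslope : 0 ≤ ux b t' - ubx b t' := by
        haveI hne : (𝓝[Icc a b \ {b}] b).NeBot := by
          apply Filter.NeBot.mono _ (nhdsWithin_mono b (show Ico a b ⊆ Icc a b \ {b} by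
            intro z hz; exact ⟨⟨hz.1, hz.2.le⟩, ne_of_lt hz.2⟩))
          apply mem_closure_iff_nhdsWithin_neBot.mp
          rw [closure_Ico (ne_of_lt hab)]
          exact ⟨hab.le, le_rfl⟩
        have htend := hasDerivWithinAt_iff_tendsto_slope.mp hda
        apply ge_of_tendsto htend
        filter_upwards [eventually_mem_nhdsWithin] with z hz
        obtain ⟨hzI, hzne⟩ := hz
        have hzb : z < b := lt_of_le_of_ne hzI.2 hzne
        have hle : u z t' - ub z t' ≤ u b t' - ub b t' := by
          have h5 := hmax (z, t') ⟨⟨hzI.1, hzI.2⟩, ht'T⟩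
          simp only [hV] at h5 ⊢
          linarith
        rw [slope_def_field]
        have h6 : z - b < 0 := by linarith
        exact div_nonneg_of_nonpos (by linarith) h6.le
      have hbca := hu.bc_b t' ht'
      have hbcb := hub.bc_b t' ht'
      nlinarith [mul_nonneg hβ1 hslope, mul_pos hσ1 hwpos]
    · -- interior case
      have hx'Ioo : x' ∈ Ioo a b := ⟨hxa, hxb⟩
      have ht'0 : 0 < t' := ht'.1
      -- (0) first spatial derivative vanishes
      have hmem : Icc a b ∈ 𝓝 x' := Icc_mem_nhds hxa hxb
      have hvx0 : ux x' t' - ubx x' t' = 0 := by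
        have hda : HasDerivAt (fun z => u z t' - ub z t') (ux x' t' - ubx x' t') x' :=
          ((hu.deriv_x t' ht' x' hx'ab).sub (hub.deriv_x t' ht' x' hx'ab)).hasDerivAt hmem
        apply IsLocalMax.hasDerivAt_eq_zero _ hda
        filter_upwards [hmem] with z hz
        have h5 := hmax (z, t') ⟨hz, ht'T⟩
        simp only [hV] at h5; linarith
      -- (i) second spatial derivative is nonpositive at the max
      have hvxx : uxx x' t' - ubxx x' t' ≤ 0 := by
        by_contra hcon2
        push_neg at hcon2
        have hcxx : ContinuousAt (fun z => uxx z t' - ubxx z t') x' :=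
          ((hu.cont_xx t' ht').sub (hub.cont_xx t' ht')).continuousAt (Ioo_mem_nhds hxa hxb)
        have hev : ∀ᶠ z in 𝓝 x', 0 < uxx z t' - ubxx z t' ∧ z ∈ Ioo a b := by
          apply Filter.Eventually.and _ (Ioo_mem_nhds hxa hxb)
          exact hcxx.eventually_const_lt hcon2
        obtain ⟨r, hr0, hball⟩ := Metric.eventually_nhds_iff.mp hev
        set x1 := x' + r/2 with hx1
        have hsub2 : Icc x' x1 ⊆ Metric.ball x' r := by
          intro z hz
          simp only [hx1] at hz
          rw [Metric.mem_ball, Real.dist_eq, abs_lt]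
          constructor
          · linarith [hz.1]
          · linarith [hz.2]
        have hP : ∀ z ∈ Icc x' x1, 0 < uxx z t' - ubxx z t' ∧ z ∈ Ioo a b :=
          fun z hz => hball (by simpa [Real.dist_eq] using (Metric.mem_ball.mp (hsub2 hz)))
        have hx1gt : x' < x1 := by simp only [hx1]; linarith
        -- φx is strictly monotone on Icc x' x1
        have hderφx : ∀ z ∈ Icc x' x1, HasDerivAt (fun w => ux w t' - ubx w t')
            (uxx z t' - ubxx z t') z := fun z hz =>
          (hu.deriv_xx t' ht' z (hP z hz).2).sub (hub.deriv_xx t' ht' z (hP z hz).2)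
        have hφxmono : StrictMonoOn (fun w => ux w t' - ubx w t') (Icc x' x1) := by
          apply strictMonoOn_of_deriv_pos (convex_Icc x' x1)
          · exact fun z hz => (hderφx z hz).differentiableAt.continuousAt.continuousWithinAt
          · intro z hz
            rw [interior_Icc] at hz
            rw [(hderφx z ⟨hz.1.le, hz.2.le⟩).deriv]
            exact (hP z ⟨hz.1.le, hz.2.le⟩).1
        have hφxpos : ∀ z ∈ Ioc x' x1, 0 < ux z t' - ubx z t' := by
          intro z hz
          have := hφxmono ⟨le_rfl, hx1gt.le⟩ ⟨hz.1.le, hz.2⟩ hz.1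
          dsimp only at this
          linarith [this, hvx0]
        -- hence φ is strictly monotone on Icc x' x1
        have hderφ : ∀ z ∈ Icc x' x1, HasDerivAt (fun w => u w t' - ub w t')
            (ux z t' - ubx z t') z := by
          intro z hz
          have hzab : z ∈ Icc a b := Ioo_subset_Icc_self (hP z hz).2
          have hmemz : Icc a b ∈ 𝓝 z := Icc_mem_nhds (hP z hz).2.1 (hP z hz).2.2
          exact ((hu.deriv_x t' ht' z hzab).sub (hub.deriv_x t' ht' z hzab)).hasDerivAt hmemz
        have hφmono : StrictMonoOn (fun w => u w t' - ub w t') (Icc x' x1) := by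
          apply strictMonoOn_of_deriv_pos (convex_Icc x' x1)
          · exact fun z hz => (hderφ z hz).differentiableAt.continuousAt.continuousWithinAt
          · intro z hz
            rw [interior_Icc] at hz
            rw [(hderφ z ⟨hz.1.le, hz.2.le⟩).deriv]
            exact hφxpos z ⟨hz.1, hz.2.le⟩
        have hlt := hφmono ⟨le_rfl, hx1gt.le⟩ ⟨hx1gt.le, le_rfl⟩ hx1gt
        have hx1ab : x1 ∈ Icc a b := Ioo_subset_Icc_self (hP x1 ⟨hx1gt.le, le_rfl⟩).2
        have h5 := hmax (x1, t') ⟨hx1ab, ht'T⟩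
        simp only [hV] at h5
        dsimp only at hlt
        linarith
      -- (ii) apply the fractional maximum-principle lemma at (x', t')
      set y : ℝ → ℝ := fun s => u x' s - ub x' s - (ε0 + k * s ^ α) with hy_def
      set y' : ℝ → ℝ := fun s => deriv (u x') s - deriv (ub x') s - k * (α * s ^ (α - 1))
        with hy'_def
      have hcu : ∀ (w : ℝ → ℝ → ℝ), ContinuousOn (fun p : ℝ × ℝ => w p.1 p.2) K →
          ContinuousOn (fun s => w x' s) (Icc 0 T) := by
        intro w hw
        exact hw.comp (Continuous.continuousOn (continuous_const.prodMk continuous_id))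
          (fun s hs => ⟨hx'ab, hs⟩)
      have hycont : ContinuousOn y (Icc 0 t') := by
        apply ContinuousOn.sub
        · exact (((hcu u hu.cont).sub (hcu ub hub.cont)).mono
            (Icc_subset_Icc le_rfl ht'T.2))
        · exact hgcont.continuousOn
      have hyd : ∀ s ∈ Ioc 0 t', HasDerivAt y (y' s) s := by
        intro s hs
        have h1 : HasDerivAt (u x') (deriv (u x') s) s :=
          (hu.diff_t x' hx'ab s ⟨hs.1, le_trans hs.2 ht'T.2⟩).hasDerivAt
        have h2 : HasDerivAt (ub x') (deriv (ub x') s) s :=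
          (hub.diff_t x' hx'ab s ⟨hs.1, le_trans hs.2 ht'T.2⟩).hasDerivAt
        have h3 : HasDerivAt (fun w : ℝ => ε0 + k * w ^ α) (k * (α * s ^ (α - 1))) s :=
          ((Real.hasDerivAt_rpow_const (x := s) (p := α)
            (Or.inl (ne_of_gt hs.1))).const_mul k).const_add ε0
        exact (h1.sub h2).sub h3
      have hy'cont : ContinuousOn y' (Ioc 0 t') := by
        apply ContinuousOn.sub
        · exact ((hu.cont_t' x' hx'ab).sub (hub.cont_t' x' hx'ab)).mono
            (Ioc_subset_Ioc le_rfl ht'T.2)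
        · apply continuousOn_const.mul (continuousOn_const.mul _)
          exact fun z hz => ((Real.continuousAt_rpow_const z (α-1)
            (Or.inl (ne_of_gt hz.1))).comp continuousAt_id).continuousWithinAt
      have hrpowint : IntervalIntegrable (fun s : ℝ => s ^ (α - 1)) volume 0 t' :=
        intervalIntegral.intervalIntegrable_rpow' (by linarith)
      have hrpowcont : ContinuousOn (fun s : ℝ => s ^ (α - 1)) (Ioc 0 t') :=
        fun z hz => ((Real.continuousAt_rpow_const z (α-1)
          (Or.inl (ne_of_gt hz.1))).comp continuousAt_id).continuousWithinAt
      have hk1 := integrable_kernel hα ht'0 ht'T.2 (hu.cont_t' x' hx'ab) (hu.int_t' x' hx'ab)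
      have hk2 := integrable_kernel hα ht'0 ht'T.2 (hub.cont_t' x' hx'ab) (hub.int_t' x' hx'ab)
      have hk3 : IntervalIntegrable (fun s => (t' - s) ^ (-α) * s ^ (α-1)) volume 0 t' :=
        integrable_kernel hα ht'0 le_rfl hrpowcont hrpowint
      have hk3' : IntervalIntegrable (fun s => (t' - s) ^ (-α) * (k * (α * s ^ (α-1))))
          volume 0 t' := by
        have heq : (fun s => (t' - s) ^ (-α) * (k * (α * s ^ (α-1))))
            = fun s => (k * α) * ((t' - s) ^ (-α) * s ^ (α-1)) := by funext s; ring
        rw [heq]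
        exact hk3.const_mul _
      have heq2 : (fun s => (t' - s) ^ (-α) * y' s)
          = fun s => ((t' - s) ^ (-α) * deriv (u x') s
            - (t' - s) ^ (-α) * deriv (ub x') s)
            - (t' - s) ^ (-α) * (k * (α * s ^ (α-1))) := by
        funext s; simp only [hy'_def]; ring
      have hker : IntervalIntegrable (fun s => (t' - s) ^ (-α) * y' s) volume 0 t' := by
        rw [heq2]; exact (hk1.sub hk2).sub hk3'
      have hmaxy : ∀ s ∈ Icc 0 t', y s ≤ y t' := by
        intro s hs
        have h5 := hmax (x', s) ⟨hx'ab, ⟨hs.1, le_trans hs.2 ht'T.2⟩⟩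
        simp only [hV] at h5
        simp only [hy_def, hg] at h5 ⊢
        exact h5
      have hluchko := luchko hα ht'0 hycont hyd hy'cont hker hmaxy
      -- the left side is positive
      have hy0 : y 0 ≤ 0 := by
        have h5 := hε0 x' hx'ab
        simp only [hy_def, hu.init x' hx'ab, hub.init x' hx'ab,
          Real.zero_rpow (ne_of_gt hα0)]
        linarith
      have hyt' : 0 < y t' := by
        simp only [hy_def]
        simp only [hV, hg] at hcon
        linarith
      have hlhs : 0 < t' ^ (-α) * (y t' - y 0) :=
        mul_pos (Real.rpow_pos_of_pos ht'0 _) (by linarith)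
      -- compute the right side
      have hsplit : ∫ s in (0:ℝ)..t', (t' - s) ^ (-α) * y' s
          = (∫ s in (0:ℝ)..t', (t' - s) ^ (-α) * deriv (u x') s)
            - (∫ s in (0:ℝ)..t', (t' - s) ^ (-α) * deriv (ub x') s)
            - ∫ s in (0:ℝ)..t', (t' - s) ^ (-α) * (k * (α * s ^ (α-1))) := by
        rw [heq2, intervalIntegral.integral_sub (hk1.sub hk2) hk3',
          intervalIntegral.integral_sub hk1 hk2]
      have hcap1 : ∫ s in (0:ℝ)..t', (t' - s) ^ (-α) * deriv (u x') s
          = Real.Gamma (1-α) * caputo α (u x') t' := by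
        rw [caputo]; field_simp
      have hcap2 : ∫ s in (0:ℝ)..t', (t' - s) ^ (-α) * deriv (ub x') s
          = Real.Gamma (1-α) * caputo α (ub x') t' := by
        rw [caputo]; field_simp
      have hbetaint : ∫ s in (0:ℝ)..t', (t' - s) ^ (-α) * (k * (α * s ^ (α-1)))
          = ε * Real.Gamma (1-α) := by
        have heq3 : (fun s => (t' - s) ^ (-α) * (k * (α * s ^ (α-1))))
            = fun s => (k * α) * ((t' - s) ^ (-α) * s ^ (α-1)) := by funext s; ring
        rw [heq3, intervalIntegral.integral_const_mul,
          beta_conv hα ht'0 (real_beta hα)]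
        have hΓrec : Real.Gamma (1 + α) = α * Real.Gamma α := by
          rw [add_comm]; exact Real.Gamma_add_one (ne_of_gt hα0)
        rw [hk]
        field_simp
        rw [hΓrec]
        ring
      have hpde1 := hu.pde x' hx'Ioo t' ht'
      have hpde2 := hub.pde x' hx'Ioo t' ht'
      have hfle := hε x' hx'ab t' (Ioc_subset_Icc_self ht')
      have hcle : 0 ≤ c x' * (u x' t' - ub x' t') :=
        mul_nonneg (hc x' hx'ab) hwpos.le
      have hrhs : (∫ s in (0:ℝ)..t', (t' - s) ^ (-α) * y' s) ≤ 0 := by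
        rw [hsplit, hcap1, hcap2, hbetaint, hpde1, hpde2]
        have hfac : Real.Gamma (1-α) * (uxx x' t' - c x' * u x' t' + f x' t')
            - Real.Gamma (1-α) * (ubxx x' t' - c x' * ub x' t' + fb x' t')
            - ε * Real.Gamma (1-α)
            = Real.Gamma (1-α) * ((uxx x' t' - ubxx x' t')
              - c x' * (u x' t' - ub x' t') + ((f x' t' - fb x' t') - ε)) := by ring
        rw [hfac]
        apply mul_nonpos_of_nonneg_of_nonpos hΓ1.le
        linarith
      linarith
  -- conclude from V ≤ 0 on K
  intro x hx t ht
  have h1 : V (x, t) ≤ 0 := le_trans (hmax (x, t) ⟨hx, ht⟩) hVle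
  simp only [hV] at h1
  have h2 : k * t ^ α ≤ k * T ^ α :=
    mul_le_mul_of_nonneg_left (Real.rpow_le_rpow ht.1 ht.2 hα0.le) hk0
  have h3 : k * T ^ α = T ^ α / Real.Gamma (1 + α) * ε := by
    rw [hk]; ring
  simp only [hg] at h1
  linarith

/-- Continuous dependence on the data, and in particular uniqueness, for
classical solutions of the time-fractional diffusion problem with Robin
boundary conditions. -/
theorem caputo_robin_continuous_dependence
    (a b T α σ0 σ1 β0 β1 ε ε0 : ℝ) (c u0 ub0 : ℝ → ℝ)
    (f u ux uxx fb ub ubx ubxx : ℝ → ℝ → ℝ)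
    (hab : a < b) (hT : 0 < T) (hα : α ∈ Ioo (0:ℝ) 1)
    (hσ0 : 0 < σ0) (hσ1 : 0 < σ1) (hβ0 : β0 ≤ 0) (hβ1 : 0 ≤ β1)
    (hc : ∀ x ∈ Icc a b, 0 ≤ c x)
    (hf_cont : ContinuousOn (fun p : ℝ × ℝ => f p.1 p.2) (Icc a b ×ˢ Icc 0 T))
    (hfb_cont : ContinuousOn (fun p : ℝ × ℝ => fb p.1 p.2) (Icc a b ×ˢ Icc 0 T))
    (hu : IsClassicalSolution a b T α σ0 σ1 β0 β1 c u0 f u ux uxx)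
    (hub : IsClassicalSolution a b T α σ0 σ1 β0 β1 c ub0 fb ub ubx ubxx)
    (hε : ∀ x ∈ Icc a b, ∀ t ∈ Icc 0 T, |f x t - fb x t| ≤ ε)
    (hε0 : ∀ x ∈ Icc a b, |u0 x - ub0 x| ≤ ε0) :
    (∀ x ∈ Icc a b, ∀ t ∈ Icc 0 T,
      |u x t - ub x t| ≤ ε0 + T ^ α / Real.Gamma (1 + α) * ε) ∧
    ((∀ x ∈ Icc a b, ∀ t ∈ Icc 0 T, f x t = fb x t) →
      (∀ x ∈ Icc a b, u0 x = ub0 x) →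
      ∀ x ∈ Icc a b, ∀ t ∈ Icc 0 T, u x t = ub x t) := by
  have hεpos : 0 ≤ ε := le_trans (abs_nonneg _) (hε a ⟨le_rfl, hab.le⟩ 0 ⟨le_rfl, hT.le⟩)
  have hε0pos : 0 ≤ ε0 := le_trans (abs_nonneg _) (hε0 a ⟨le_rfl, hab.le⟩)
  have h1 := key_onesided a b T α σ0 σ1 β0 β1 ε ε0 c u0 ub0 f u ux uxx fb ub ubx ubxx
    hab hT hα hσ0 hσ1 hβ0 hβ1 hc hu hub
    (fun x hx t ht => le_trans (le_abs_self _) (hε x hx t ht))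
    (fun x hx => le_trans (le_abs_self _) (hε0 x hx)) hεpos hε0pos
  have h2 := key_onesided a b T α σ0 σ1 β0 β1 ε ε0 c ub0 u0 fb ub ubx ubxx f u ux uxx
    hab hT hα hσ0 hσ1 hβ0 hβ1 hc hub hu
    (fun x hx t ht => by
      have h := hε x hx t ht
      rw [abs_sub_comm] at h
      exact le_trans (le_abs_self _) h)
    (fun x hx => by
      have h := hε0 x hx
      rw [abs_sub_comm] at h
      exact le_trans (le_abs_self _) h) hεpos hε0pos
  refine ⟨fun x hx t ht => abs_le.mpr ⟨?_, h1 x hx t ht⟩, fun hf h0 x hx t ht => ?_⟩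
  · have := h2 x hx t ht
    linarith
  · have k1 := key_onesided a b T α σ0 σ1 β0 β1 0 0 c u0 ub0 f u ux uxx fb ub ubx ubxx
      hab hT hα hσ0 hσ1 hβ0 hβ1 hc hu hub
      (fun x hx t ht => le_of_eq (by rw [hf x hx t ht]; ring))
      (fun x hx => le_of_eq (by rw [h0 x hx]; ring)) le_rfl le_rfl
    have k2 := key_onesided a b T α σ0 σ1 β0 β1 0 0 c ub0 u0 fb ub ubx ubxx f u ux uxx
      hab hT hα hσ0 hσ1 hβ0 hβ1 hc hub hu
      (fun x hx t ht => le_of_eq (by rw [hf x hx t ht]; ring))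
      (fun x hx => le_of_eq (by rw [h0 x hx]; ring)) le_rfl le_rfl
    have e1 := k1 x hx t ht
    have e2 := k2 x hx t ht
    have hz : (0:ℝ) + T ^ α / Real.Gamma (1 + α) * 0 = 0 := by ring
    rw [hz] at e1 e2
    linarith
end
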